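/- arXiv:0812.2466 — 10 statements merged into one kernel-verified Lean document; each statement's English description precedes it below -/
import Mathlib

section
/- Let w be an infinite word over the finite alphabet {0, 1, ..., k-1} for some k ≥ 1. If there exist a vector v ∈ ℚ^k and a positive integer M such that the L∞ distance μ(ψ(w[1..i]), i·v) ≤ M for all i ≥ 0, then w contains an abelian α-power for every integer α ≥ 2. -/
/-!
The bounded deviations `|w[0..i)|_a - i v_a` have denominators dividing that of `v_a`, so
they take only finitely many values. Van der Waerden's theorem then gives an arithmetic
progression `n, n + d, …, n + α d` along which the deviation vector is constant, and each of
the `α` consecutive blocks of length `d` between these points has Parikh vector `d • v`.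
-/

open Finset

theorem exists_arithProg_forall_eq_of_finite_range {κ : Type*} (f : ℕ → κ)
    (hf : (Set.range f).Finite) (m : ℕ) : ∃ n d, 0 < d ∧ ∀ s ≤ m, f (n + s * d) = f n := by
  have := hf.to_subtype
  obtain ⟨d, hd, n, c, hc⟩ :=
    Combinatorics.exists_mono_homothetic_copy (range (m + 1)) (Set.rangeFactorization f)
  refine ⟨n, d, hd, fun s hs => ?_⟩
  have hs := congrArg Subtype.val (hc s (mem_range.2 (Nat.lt_succ_of_le hs)))
  have h0 := congrArg Subtype.val (hc 0 (mem_range.2 m.succ_pos))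
  simp only [Set.rangeFactorization, smul_eq_mul, mul_zero, zero_add] at hs h0
  rw [add_comm, mul_comm, hs, h0]

theorem Set.finite_range_of_abs_le {β ι : Type*} [Fintype ι] (f : β → ι → ℤ)
    (B : ι → ℤ) (h : ∀ i a, |f i a| ≤ B a) : (Set.range f).Finite := by
  classical
  exact (Set.finite_Icc (-B) B).subset <| Set.range_subset_iff.2 fun i =>
    ⟨fun a => neg_le_of_abs_le (h i a), fun a => le_of_abs_le (h i a)⟩

namespace Word

variable {α : Type*} [DecidableEq α] (w : ℕ → α) (v : α → ℚ)

def letterCount (a : α) (i : ℕ) : ℕ := #{t ∈ range i | w t = a}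

def deviation (i : ℕ) (a : α) : ℚ := letterCount w a i - i * v a

def scaledDeviation (i : ℕ) (a : α) : ℤ := (v a).den * letterCount w a i - i * (v a).num

theorem letterCount_add_card_filter_Ico (a : α) {m m' : ℕ} (h : m ≤ m') :
    letterCount w a m + #{t ∈ Ico m m' | w t = a} = letterCount w a m' := by
  simp only [letterCount, card_filter]
  exact sum_range_add_sum_Ico _ h

theorem scaledDeviation_cast (i : ℕ) (a : α) :
    (scaledDeviation w v i a : ℚ) = (v a).den * deviation w v i a := by
  simp only [scaledDeviation, deviation, Int.cast_sub, Int.cast_mul, Int.cast_natCast,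
    ← Rat.den_mul_eq_num]
  ring

theorem abs_scaledDeviation_le {i : ℕ} {a : α} {M : ℚ} (h : |deviation w v i a| ≤ M) :
    (|scaledDeviation w v i a| : ℚ) ≤ (v a).den * M := by
  rw [scaledDeviation_cast, abs_mul, Nat.abs_cast]
  exact mul_le_mul_of_nonneg_left h (Nat.cast_nonneg _)

theorem card_filter_Ico_eq_of_deviation_eq {n d m : ℕ}
    (h : ∀ s ≤ m, deviation w v (n + s * d) = deviation w v n) {i : ℕ} (hi : i < m) (a : α) :
    #{t ∈ Ico (n + i * d) (n + (i + 1) * d) | w t = a} = #{t ∈ Ico n (n + d) | w t = a} := by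
  have block (j : ℕ) (hj : j < m) :
      (#{t ∈ Ico (n + j * d) (n + (j + 1) * d) | w t = a} : ℚ) = d * v a := by
    have hcount := letterCount_add_card_filter_Ico w a
      (show n + j * d ≤ n + (j + 1) * d by gcongr; omega)
    have hj₀ := congrFun (h j hj.le) a
    have hj₁ := congrFun (h (j + 1) hj) a
    simp only [deviation] at hj₀ hj₁
    rw [← hcount] at hj₁
    push_cast at hj₀ hj₁ ⊢
    linarith
  have block₀ := block 0 (by omega)
  rw [zero_mul, add_zero, zero_add, one_mul] at block₀
  exact_mod_cast (block i hi).trans block₀.symm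

end Word

open Word in
theorem stmt_0_general (k : ℕ) (w : ℕ → Fin k) (v : Fin k → ℚ) (M : ℕ)
    (h : ∀ i : ℕ, ∀ a : Fin k,
      |((((Finset.range i).filter (fun t => w t = a)).card : ℚ) - (i : ℚ) * v a)| ≤ (M : ℚ)) :
    ∀ α : ℕ, 2 ≤ α → ∃ n d : ℕ, 1 ≤ d ∧
      ∀ i : ℕ, i < α → ∀ a : Fin k,
        ((Finset.Ico (n + i * d) (n + (i + 1) * d)).filter (fun t => w t = a)).card =
          ((Finset.Ico n (n + d)).filter (fun t => w t = a)).card := by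
  intro α _
  have hbound (i : ℕ) (a : Fin k) : |scaledDeviation w v i a| ≤ (v a).den * M := by
    exact_mod_cast abs_scaledDeviation_le w v (h i a)
  obtain ⟨n, d, hd, hconst⟩ := exists_arithProg_forall_eq_of_finite_range _
    (Set.finite_range_of_abs_le _ _ hbound) α
  have hdev (s : ℕ) (hs : s ≤ α) : deviation w v (n + s * d) = deviation w v n := by
    funext a
    have := congrArg (fun z : ℤ => (z : ℚ)) (congrFun (hconst s hs) a)
    simp only [scaledDeviation_cast] at this
    exact mul_left_cancel₀ (Nat.cast_ne_zero.2 (v a).den_nz) this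
  exact ⟨n, d, hd, fun i hi => card_filter_Ico_eq_of_deviation_eq w v hdev hi⟩

/-- If an infinite word `w` over `{0, …, k-1}` has Parikh vectors of
prefixes staying within `L^∞` distance `M` of `i • v` for a rational vector `v`, then
`w` contains an abelian `α`-power for every `α ≥ 2`. -/
theorem stmt_0 (k : ℕ) (hk : 1 ≤ k) (w : ℕ → Fin k) (v : Fin k → ℚ) (M : ℕ) (hM : 0 < M)
    (h : ∀ i : ℕ, ∀ a : Fin k,
      |((((Finset.range i).filter (fun t => w t = a)).card : ℚ) - (i : ℚ) * v a)| ≤ (M : ℚ)) :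
    ∀ α : ℕ, 2 ≤ α → ∃ n d : ℕ, 1 ≤ d ∧
      ∀ i : ℕ, i < α → ∀ a : Fin k,
        ((Finset.Ico (n + i * d) (n + (i + 1) * d)).filter (fun t => w t = a)).card =
          ((Finset.Ico n (n + d)).filter (fun t => w t = a)).card :=
  stmt_0_general k w v M h
end

section
/- For every infinite word w over the alphabet Σ_k = {0, 1, ..., k-1} (k ≥ 1) and every integer r ≥ 2, w contains a factor of the form x_1 x_2 ⋯ x_r where |x_1| = |x_2| = ⋯ = |x_r| and ∑x_1 ≡ ∑x_2 ≡ ⋯ ≡ ∑x_r ≡ 0 (mod k). -/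
/-- Every infinite word over `{0, 1, …, k-1}` contains, for every `r ≥ 2`,
a factor `x₁ x₂ ⋯ x_r` of equal-length blocks each of whose sums is `≡ 0 (mod k)`. -/
theorem stmt_3 (k : ℕ) (hk : 1 ≤ k) (w : ℕ → ℕ) (hw : ∀ i, w i < k)
    (r : ℕ) (hr : 2 ≤ r) :
    ∃ n d : ℕ, 1 ≤ d ∧
      ∀ i : ℕ, i < r → (∑ t ∈ Finset.Ico (n + i * d) (n + (i + 1) * d), w t) % k = 0 := by
  haveI : NeZero k := ⟨by omega⟩
  -- color m by the prefix sum ∑_{t<m} w t in ZMod k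
  set C : ℕ → ZMod k := fun m => ((∑ t ∈ Finset.range m, w t : ℕ) : ZMod k) with hC
  obtain ⟨a, ha, b, c, hmono⟩ :=
    Combinatorics.exists_mono_homothetic_copy (Finset.range (r + 1)) C
  refine ⟨b, a, ha, fun i hi => ?_⟩
  have h1 : C (a • i + b) = c := hmono i (Finset.mem_range.mpr (by omega))
  have h2 : C (a • (i + 1) + b) = c := hmono (i + 1) (Finset.mem_range.mpr (by omega))
  have hle : b + i * a ≤ b + (i + 1) * a := by nlinarith
  have hsum : (∑ t ∈ Finset.range (b + i * a), w t)
      + (∑ t ∈ Finset.Ico (b + i * a) (b + (i + 1) * a), w t)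
      = ∑ t ∈ Finset.range (b + (i + 1) * a), w t := by
    rw [← Finset.sum_range_add_sum_Ico _ hle]
  have key : ((∑ t ∈ Finset.Ico (b + i * a) (b + (i + 1) * a), w t : ℕ) : ZMod k) = 0 := by
    have := congrArg (fun x : ℕ => (x : ZMod k)) hsum
    push_cast at this ⊢
    have e1 : C (a • i + b) = ((∑ t ∈ Finset.range (b + i * a), w t : ℕ) : ZMod k) := by
      simp [hC, smul_eq_mul]; push_cast; ring_nf
    have e2 : C (a • (i + 1) + b) = ((∑ t ∈ Finset.range (b + (i + 1) * a), w t : ℕ) : ZMod k) := by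
      simp [hC, smul_eq_mul]; push_cast; ring_nf
    push_cast at e1 e2
    rw [← e1, h1, ← e2, h2] at this
    linear_combination this
  have := (ZMod.natCast_eq_zero_iff _ k).mp key
  omega
end

section
/- Let φ be the morphism on the alphabet {0, 1, 0', −1} defined by φ(0) = 0 1 0' −1, φ(1) = 0 1 −1 1, φ(0') = 0' −1 0 1, φ(−1) = 0' −1 1 −1, and let τ be the coding with τ(0) = τ(0') = 0, τ(1) = 1, τ(−1) = −1. Then the infinite word w = τ(φ^ω(0)) is squarefree and contains no factor of the form x x' (with x, x' consecutive nonempty blocks, no condition on their lengths) where ∑x = ∑x' ≠ 0. -/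
/-- The morphism `φ` on the alphabet `{0, 1, 0', -1}`, encoded as `Fin 4` with
`0 ↦ 0`, `1 ↦ 1`, `0' ↦ 2`, `-1 ↦ 3`. -/
def phi : Fin 4 → List (Fin 4)
  | 0 => [0, 1, 2, 3]
  | 1 => [0, 1, 3, 1]
  | 2 => [2, 3, 0, 1]
  | 3 => [2, 3, 1, 3]

lemma phi_length (a : Fin 4) : (phi a).length = 4 := by
  fin_cases a <;> rfl

/-- The infinite fixed point `φ^ω(0)`: since `φ` is `4`-uniform and `φ(0)` begins with `0`,
the fixed point satisfies `W n = (φ (W (n / 4)))[n % 4]`, with `W 0 = 0`. -/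
def W : ℕ → Fin 4
  | 0 => 0
  | n + 1 =>
      (phi (W ((n + 1) / 4))).get
        ⟨(n + 1) % 4, by rw [phi_length]; exact Nat.mod_lt _ (by norm_num)⟩
decreasing_by exact Nat.div_lt_self (Nat.succ_pos n) (by norm_num)

/-- The coding `τ` with `τ(0) = τ(0') = 0`, `τ(1) = 1`, `τ(-1) = -1`. -/
def tau : Fin 4 → ℤ
  | 0 => 0
  | 1 => 1
  | 2 => 0
  | 3 => -1

def phiN (a : Fin 4) (r : ℕ) : Fin 4 :=
  (phi a).get ⟨r % 4, by rw [phi_length]; omega⟩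

def sig : Fin 4 → ℤ
  | 0 => 0
  | 1 => 0
  | 2 => 1
  | 3 => 1

lemma W_eq (n : ℕ) : W n = phiN (W (n / 4)) (n % 4) := by
  cases n with
  | zero => rw [W]; rfl
  | succ m =>
    rw [W]
    unfold phiN
    congr 1
    exact Fin.ext (by simp)

lemma W_rep {p k r : ℕ} (h : p = 4 * k + r) (hr : r < 4) : W p = phiN (W k) r := by
  subst h
  rw [W_eq]
  congr 2 <;> omega

/-! ### partial sums -/

def S (n : ℕ) : ℤ := ∑ t ∈ Finset.range n, tau (W t)

lemma S_succ (n : ℕ) : S (n + 1) = S n + tau (W n) := Finset.sum_range_succ _ _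

lemma S4 : ∀ k, S (4 * k) = S k := by
  intro k
  induction k with
  | zero => rfl
  | succ k ih =>
    have h : 4 * (k + 1) = (4 * k + 1 + 1 + 1) + 1 := by ring
    rw [h, S_succ, S_succ, S_succ, S_succ,
      W_rep (show 4 * k = 4 * k + 0 by ring) (by norm_num),
      W_rep (show 4 * k + 1 = 4 * k + 1 by ring) (by norm_num),
      W_rep (show 4 * k + 1 + 1 = 4 * k + 2 by ring) (by norm_num),
      W_rep (show 4 * k + 1 + 1 + 1 = 4 * k + 3 by ring) (by norm_num), ih, S_succ]
    have : ∀ a : Fin 4,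
        tau (phiN a 0) + tau (phiN a 1) + tau (phiN a 2) + tau (phiN a 3) = tau a := by decide
    have := this (W k)
    omega

lemma SW : ∀ n, S n = sig (W n) := by
  intro n
  induction n using Nat.strong_induction_on with
  | _ n ih =>
    match n with
    | 0 => rw [show W 0 = 0 from by rw [W]]; rfl
    | (m + 1) =>
      have hr : (m + 1) % 4 = 0 ∨ (m + 1) % 4 = 1 ∨ (m + 1) % 4 = 2 ∨ (m + 1) % 4 = 3 := by
        omega
      set k := (m + 1) / 4 with hk
      rcases hr with h | h | h | h
      · -- m + 1 = 4 * k
        have e : m + 1 = 4 * k := by omega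
        have hk1 : 1 ≤ k := by omega
        rw [e, S4, ih k (by omega), W_rep (show 4 * k = 4 * k + 0 by ring) (by norm_num)]
        exact (by decide : ∀ a : Fin 4, sig a = sig (phiN a 0)) (W k)
      · have e : m = 4 * k := by omega
        rw [S_succ, ih m (by omega), W_rep (show m = 4 * k + 0 by omega) (by norm_num),
          W_rep (show m + 1 = 4 * k + 1 by omega) (by norm_num)]
        exact (by decide : ∀ a : Fin 4, sig (phiN a 0) + tau (phiN a 0) = sig (phiN a 1)) (W k)
      · rw [S_succ, ih m (by omega), W_rep (show m = 4 * k + 1 by omega) (by norm_num),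
          W_rep (show m + 1 = 4 * k + 2 by omega) (by norm_num)]
        exact (by decide : ∀ a : Fin 4, sig (phiN a 1) + tau (phiN a 1) = sig (phiN a 2)) (W k)
      · rw [S_succ, ih m (by omega), W_rep (show m = 4 * k + 2 by omega) (by norm_num),
          W_rep (show m + 1 = 4 * k + 3 by omega) (by norm_num)]
        exact (by decide : ∀ a : Fin 4, sig (phiN a 2) + tau (phiN a 2) = sig (phiN a 3)) (W k)

lemma S_range (n : ℕ) : S n = 0 ∨ S n = 1 := by
  rw [SW]
  exact (by decide : ∀ a : Fin 4, sig a = 0 ∨ sig a = 1) (W n)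
lemma W_adj (n : ℕ) : W n ≠ W (n + 1) := by
  have hr : n % 4 = 0 ∨ n % 4 = 1 ∨ n % 4 = 2 ∨ n % 4 = 3 := by omega
  set k := n / 4 with hk
  rcases hr with h | h | h | h
  · rw [W_rep (show n = 4 * k + 0 by omega) (by norm_num),
      W_rep (show n + 1 = 4 * k + 1 by omega) (by norm_num)]
    exact (by decide : ∀ a : Fin 4, phiN a 0 ≠ phiN a 1) (W k)
  · rw [W_rep (show n = 4 * k + 1 by omega) (by norm_num),
      W_rep (show n + 1 = 4 * k + 2 by omega) (by norm_num)]
    exact (by decide : ∀ a : Fin 4, phiN a 1 ≠ phiN a 2) (W k)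
  · rw [W_rep (show n = 4 * k + 2 by omega) (by norm_num),
      W_rep (show n + 1 = 4 * k + 3 by omega) (by norm_num)]
    exact (by decide : ∀ a : Fin 4, phiN a 2 ≠ phiN a 3) (W k)
  · rw [W_rep (show n = 4 * k + 3 by omega) (by norm_num),
      W_rep (show n + 1 = 4 * (k + 1) + 0 by omega) (by norm_num)]
    exact (by decide : ∀ a b : Fin 4, phiN a 3 ≠ phiN b 0) (W k) (W (k + 1))

/-- positions `≡ 0 (mod 4)` carry letters in `{0,2}`, odd positions letters in `{1,3}`. -/
lemma ne_mix {p q : ℕ} (hp : p % 4 = 0) (hq : q % 2 = 1) : W p ≠ W q := by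
  rw [W_rep (show p = 4 * (p / 4) + 0 by omega) (by norm_num)]
  have hq4 : q % 4 = 1 ∨ q % 4 = 3 := by omega
  rcases hq4 with h | h
  · rw [W_rep (show q = 4 * (q / 4) + 1 by omega) (by norm_num)]
    exact (by decide : ∀ a b : Fin 4, phiN a 0 ≠ phiN b 1) _ _
  · rw [W_rep (show q = 4 * (q / 4) + 3 by omega) (by norm_num)]
    exact (by decide : ∀ a b : Fin 4, phiN a 0 ≠ phiN b 3) _ _

lemma no_sq : ∀ d : ℕ, 1 ≤ d → ∀ i : ℕ, ∃ t, t < d ∧ W (i + t) ≠ W (i + d + t) := by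
  intro d
  induction d using Nat.strong_induction_on with
  | _ d ih =>
    intro hd i
    by_contra hcon
    push_neg at hcon
    -- hcon : ∀ t < d, W (i+t) = W (i+d+t)
    have hmod : d % 2 = 1 ∨ d % 4 = 2 ∨ (d % 4 = 0 ∧ 4 ≤ d) := by omega
    rcases hmod with hodd | h2 | ⟨h0, h4⟩
    · -- d odd
      by_cases hd1 : d = 1
      · exact W_adj i (by have := hcon 0 (by omega); simpa [hd1] using this)
      · -- d ≥ 3 odd
        set t0 := (4 - (i + d) % 4) % 4 with ht0
        by_cases hlt : t0 < d
        · exact ne_mix (p := i + d + t0) (q := i + t0) (by omega) (by omega)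
            (hcon t0 hlt).symm
        · -- t0 ≥ d: forces d = 3, i % 4 = 2
          have hi2 : d = 3 ∧ i % 4 = 2 := by omega
          exact ne_mix (p := i + 2) (q := i + d + 2) (by omega) (by omega)
            (hcon 2 (by omega))
    · -- d ≡ 2 (mod 4)
      set t0 := (4 - i % 4) % 4 with ht0
      by_cases h5 : t0 + 4 < d
      · -- generic case: five consecutive equations at an aligned position
        set k := (i + t0) / 4 with hk
        set m := (i + d + t0) / 4 with hm
        have e0 := hcon t0 (by omega)
        have e1 := hcon (t0 + 1) (by omega)
        have e2 := hcon (t0 + 2) (by omega)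
        have e3 := hcon (t0 + 3) (by omega)
        have e4 := hcon (t0 + 4) (by omega)
        rw [W_rep (show i + t0 = 4 * k + 0 by omega) (by norm_num),
          W_rep (show i + d + t0 = 4 * m + 2 by omega) (by norm_num)] at e0
        rw [show i + (t0 + 1) = i + t0 + 1 by ring, show i + d + (t0 + 1) = i + d + t0 + 1 by ring,
          W_rep (show i + t0 + 1 = 4 * k + 1 by omega) (by norm_num),
          W_rep (show i + d + t0 + 1 = 4 * m + 3 by omega) (by norm_num)] at e1
        rw [show i + (t0 + 2) = i + t0 + 2 by ring, show i + d + (t0 + 2) = i + d + t0 + 2 by ring,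
          W_rep (show i + t0 + 2 = 4 * k + 2 by omega) (by norm_num),
          W_rep (show i + d + t0 + 2 = 4 * (m + 1) + 0 by omega) (by norm_num)] at e2
        rw [show i + (t0 + 3) = i + t0 + 3 by ring, show i + d + (t0 + 3) = i + d + t0 + 3 by ring,
          W_rep (show i + t0 + 3 = 4 * k + 3 by omega) (by norm_num),
          W_rep (show i + d + t0 + 3 = 4 * (m + 1) + 1 by omega) (by norm_num)] at e3
        rw [show i + (t0 + 4) = i + t0 + 4 by ring, show i + d + (t0 + 4) = i + d + t0 + 4 by ring,
          W_rep (show i + t0 + 4 = 4 * (k + 1) + 0 by omega) (by norm_num),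
          W_rep (show i + d + t0 + 4 = 4 * (m + 1) + 2 by omega) (by norm_num)] at e4
        exact W_adj m ((by decide : ∀ A A' B C : Fin 4,
          phiN A 0 = phiN B 2 → phiN A 1 = phiN B 3 → phiN A 2 = phiN C 0 →
          phiN A 3 = phiN C 1 → phiN A' 0 = phiN C 2 → B = C)
          (W k) (W (k + 1)) (W m) (W (m + 1)) e0 e1 e2 e3 e4)
      · -- t0 + 4 ≥ d together with d % 4 = 2 forces d = 2, or d = 6 with i % 4 ∈ {1, 2}
        have hcase : d = 2 ∨ (d = 6 ∧ i % 4 = 1) ∨ (d = 6 ∧ i % 4 = 2) := by omega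
        rcases hcase with rfl | ⟨rfl, hi⟩ | ⟨rfl, hi⟩
        · -- d = 2
          have hr : i % 4 = 0 ∨ i % 4 = 1 ∨ i % 4 = 2 ∨ i % 4 = 3 := by omega
          set k := i / 4 with hk
          have e0 := hcon 0 (by omega)
          have e1 := hcon 1 (by omega)
          rcases hr with h | h | h | h
          · rw [W_rep (show i + 0 = 4 * k + 0 by omega) (by norm_num),
              W_rep (show i + 2 + 0 = 4 * k + 2 by omega) (by norm_num)] at e0
            exact (by decide : ∀ a : Fin 4, phiN a 0 ≠ phiN a 2) (W k) e0
          · rw [W_rep (show i + 0 = 4 * k + 1 by omega) (by norm_num),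
              W_rep (show i + 2 + 0 = 4 * k + 3 by omega) (by norm_num)] at e0
            rw [W_rep (show i + 1 = 4 * k + 2 by omega) (by norm_num),
              W_rep (show i + 2 + 1 = 4 * (k + 1) + 0 by omega) (by norm_num)] at e1
            exact (by decide : ∀ a b : Fin 4,
              phiN a 1 = phiN a 3 → phiN a 2 = phiN b 0 → False) (W k) (W (k + 1)) e0 e1
          · rw [W_rep (show i + 0 = 4 * k + 2 by omega) (by norm_num),
              W_rep (show i + 2 + 0 = 4 * (k + 1) + 0 by omega) (by norm_num)] at e0
            rw [W_rep (show i + 1 = 4 * k + 3 by omega) (by norm_num),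
              W_rep (show i + 2 + 1 = 4 * (k + 1) + 1 by omega) (by norm_num)] at e1
            have hsig : sig (W (k + 1)) = sig (W k) + tau (W k) := by
              rw [← SW, ← SW, S_succ]
            exact (by decide : ∀ a b : Fin 4,
              phiN a 2 = phiN b 0 → phiN a 3 = phiN b 1 →
              sig b = sig a + tau a → False) (W k) (W (k + 1)) e0 e1 hsig
          · rw [W_rep (show i + 1 = 4 * (k + 1) + 0 by omega) (by norm_num),
              W_rep (show i + 2 + 1 = 4 * (k + 1) + 2 by omega) (by norm_num)] at e1
            exact (by decide : ∀ b : Fin 4, phiN b 0 ≠ phiN b 2) (W (k + 1)) e1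
        · -- d = 6, i % 4 = 1
          set k := i / 4 with hk
          have e0 := hcon 0 (by omega)
          have e1 := hcon 1 (by omega)
          have e2 := hcon 2 (by omega)
          have e3 := hcon 3 (by omega)
          have e4 := hcon 4 (by omega)
          have e5 := hcon 5 (by omega)
          rw [W_rep (show i + 0 = 4 * k + 1 by omega) (by norm_num),
            W_rep (show i + 6 + 0 = 4 * (k + 1) + 3 by omega) (by norm_num)] at e0
          rw [W_rep (show i + 1 = 4 * k + 2 by omega) (by norm_num),
            W_rep (show i + 6 + 1 = 4 * (k + 2) + 0 by omega) (by norm_num)] at e1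
          rw [W_rep (show i + 2 = 4 * k + 3 by omega) (by norm_num),
            W_rep (show i + 6 + 2 = 4 * (k + 2) + 1 by omega) (by norm_num)] at e2
          rw [W_rep (show i + 3 = 4 * (k + 1) + 0 by omega) (by norm_num),
            W_rep (show i + 6 + 3 = 4 * (k + 2) + 2 by omega) (by norm_num)] at e3
          rw [W_rep (show i + 4 = 4 * (k + 1) + 1 by omega) (by norm_num),
            W_rep (show i + 6 + 4 = 4 * (k + 2) + 3 by omega) (by norm_num)] at e4
          rw [W_rep (show i + 5 = 4 * (k + 1) + 2 by omega) (by norm_num),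
            W_rep (show i + 6 + 5 = 4 * (k + 3) + 0 by omega) (by norm_num)] at e5
          exact W_adj k ((by decide : ∀ a b c f : Fin 4,
            phiN a 1 = phiN b 3 → phiN a 2 = phiN c 0 → phiN a 3 = phiN c 1 →
            phiN b 0 = phiN c 2 → phiN b 1 = phiN c 3 → phiN b 2 = phiN f 0 → a = b)
            (W k) (W (k + 1)) (W (k + 2)) (W (k + 3)) e0 e1 e2 e3 e4 e5)
        · -- d = 6, i % 4 = 2
          set k := i / 4 with hk
          have e0 := hcon 0 (by omega)
          have e1 := hcon 1 (by omega)
          have e2 := hcon 2 (by omega)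
          have e3 := hcon 3 (by omega)
          have e4 := hcon 4 (by omega)
          rw [W_rep (show i + 0 = 4 * k + 2 by omega) (by norm_num),
            W_rep (show i + 6 + 0 = 4 * (k + 2) + 0 by omega) (by norm_num)] at e0
          rw [W_rep (show i + 1 = 4 * k + 3 by omega) (by norm_num),
            W_rep (show i + 6 + 1 = 4 * (k + 2) + 1 by omega) (by norm_num)] at e1
          rw [W_rep (show i + 2 = 4 * (k + 1) + 0 by omega) (by norm_num),
            W_rep (show i + 6 + 2 = 4 * (k + 2) + 2 by omega) (by norm_num)] at e2
          rw [W_rep (show i + 3 = 4 * (k + 1) + 1 by omega) (by norm_num),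
            W_rep (show i + 6 + 3 = 4 * (k + 2) + 3 by omega) (by norm_num)] at e3
          rw [W_rep (show i + 4 = 4 * (k + 1) + 2 by omega) (by norm_num),
            W_rep (show i + 6 + 4 = 4 * (k + 3) + 0 by omega) (by norm_num)] at e4
          exact W_adj k ((by decide : ∀ a b c f : Fin 4,
            phiN a 2 = phiN c 0 → phiN a 3 = phiN c 1 → phiN b 0 = phiN c 2 →
            phiN b 1 = phiN c 3 → phiN b 2 = phiN f 0 → a = b)
            (W k) (W (k + 1)) (W (k + 2)) (W (k + 3)) e0 e1 e2 e3 e4)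
    · -- d ≡ 0 (mod 4), d ≥ 4 : reduce to a square of length d / 4
      set e := d / 4 with he
      set k0 := (i + 1) / 4 with hk0
      have key : ∀ j, j < e → W (k0 + j) = W (k0 + j + e) := by
        intro j hj
        have hc := hcon (4 * (k0 + j) + 2 - i) (by omega)
        rw [show i + (4 * (k0 + j) + 2 - i) = 4 * (k0 + j) + 2 by omega,
          show i + d + (4 * (k0 + j) + 2 - i) = 4 * (k0 + j + e) + 2 by omega,
          W_rep (rfl : 4 * (k0 + j) + 2 = 4 * (k0 + j) + 2) (by norm_num),
          W_rep (rfl : 4 * (k0 + j + e) + 2 = 4 * (k0 + j + e) + 2) (by norm_num)] at hc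
        exact (by decide : ∀ a b : Fin 4, phiN a 2 = phiN b 2 → a = b) _ _ hc
      obtain ⟨t, ht, hne⟩ := ih e (by omega) (by omega) k0
      rw [show k0 + e + t = k0 + t + e by ring] at hne
      exact hne (key t ht)
/-- Letters are determined by their `tau` and `sig` values. -/
lemma letter_det : ∀ a b : Fin 4, tau a = tau b → sig a = sig b → a = b := by decide

/-- The word `w = τ(φ^ω(0))` is squarefree and contains no factor `x x'`
of consecutive nonempty blocks (of any lengths) with `∑x = ∑x' ≠ 0`. -/
theorem stmt_4 :
    (∀ i d : ℕ, 1 ≤ d → ∃ t : ℕ, t < d ∧ tau (W (i + t)) ≠ tau (W (i + d + t))) ∧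
    (∀ i m n : ℕ, 1 ≤ m → 1 ≤ n →
      (∑ t ∈ Finset.Ico i (i + m), tau (W t)) =
        (∑ t ∈ Finset.Ico (i + m) (i + m + n), tau (W t)) →
      (∑ t ∈ Finset.Ico i (i + m), tau (W t)) = 0) := by
  constructor
  · -- squarefreeness of the coded word
    intro i d hd
    by_contra hcon
    push_neg at hcon
    -- the partial-sum difference is constant along the square
    have key : ∀ t, t ≤ d → S (i + d + t) - S (i + t) = S (i + d) - S i := by
      intro t
      induction t with
      | zero => intro _; simp
      | succ t iht =>
        intro ht
        have h1 : t < d := by omega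
        have e1 : S (i + d + (t + 1)) = S (i + d + t) + tau (W (i + d + t)) := by
          rw [show i + d + (t + 1) = (i + d + t) + 1 by ring, S_succ]
        have e2 : S (i + (t + 1)) = S (i + t) + tau (W (i + t)) := by
          rw [show i + (t + 1) = (i + t) + 1 by ring, S_succ]
        have := iht (by omega)
        rw [e1, e2, ← hcon t h1]
        omega
    have h0 := key d le_rfl
    have r1 := S_range i
    have r2 := S_range (i + d)
    have r3 := S_range (i + d + d)
    have hc0 : S (i + d) = S i := by omega
    have hW : ∀ t, t < d → W (i + t) = W (i + d + t) := by
      intro t ht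
      have hs : S (i + t) = S (i + d + t) := by
        have := key t (by omega); omega
      refine letter_det _ _ (hcon t ht) ?_
      rw [← SW, ← SW]
      omega
    obtain ⟨t, ht, hne⟩ := no_sq d hd i
    exact hne (hW t ht)
  · -- additive part
    intro i m n hm hn h
    have e1 : (∑ t ∈ Finset.Ico i (i + m), tau (W t)) = S (i + m) - S i :=
      Finset.sum_Ico_eq_sub _ (by omega)
    have e2 : (∑ t ∈ Finset.Ico (i + m) (i + m + n), tau (W t)) = S (i + m + n) - S (i + m) :=
      Finset.sum_Ico_eq_sub _ (by omega)
    rw [e1, e2] at h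
    rw [e1]
    have r1 := S_range i
    have r2 := S_range (i + m)
    have r3 := S_range (i + m + n)
    omega
end

section
/- Let φ be the morphism on {0, 1, 0', −1} defined by φ(0) = 0 1 0' −1, φ(1) = 0 1 −1 1, φ(0') = 0' −1 0 1, φ(−1) = 0' −1 1 −1, let τ be the coding with τ(0) = τ(0') = 0, τ(1) = 1, τ(−1) = −1, and let ψ be the morphism on {0, 1, −1} defined by ψ(0) = 0 1 0 −1, ψ(1) = 0 1 −1 1 0 −1, ψ(−1) = 1 −1. Then τ(φ^n(0)) = ψ^n(0) for all n ≥ 0. -/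
/-- The morphism `ψ` on the alphabet `{0, 1, -1} ⊆ ℤ`:
`ψ(0) = 0 1 0 -1`, `ψ(1) = 0 1 -1 1 0 -1`, `ψ(-1) = 1 -1`. -/
def psi : ℤ → List ℤ := fun a =>
  if a = 0 then [0, 1, 0, -1]
  else if a = 1 then [0, 1, -1, 1, 0, -1]
  else if a = -1 then [1, -1]
  else []

/-- Extension of a map on letters to a morphism on words (`Fin 4` alphabet). -/
def ext (h : Fin 4 → List (Fin 4)) : List (Fin 4) → List (Fin 4) :=
  fun l => l.flatMap h

/-- Extension of a map on letters to a morphism on words (`ℤ` alphabet). -/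
def extZ (h : ℤ → List ℤ) : List ℤ → List ℤ :=
  fun l => l.flatMap h

/-!
The words `φⁿ(0)` factor into the blocks `0`, `1 -1` and `1 0' -1`, and `φ` maps each block to a
concatenation of blocks. Letter by letter `τ ∘ φ ≠ ψ ∘ τ` (already `τ(φ(1))` is too short), but
block by block the two agree. So `φ` is semiconjugate, through the decoding of blocks, to a
morphism on a three-letter block alphabet, and so is `ψ` through the decoding followed by `τ`.
-/

open Function

theorem List.semiconj_flatMap {α β : Type*} {f : α → List β} {g : α → List α} {h : β → List β}
    (hf : ∀ a, (g a).flatMap f = (f a).flatMap h) :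
    Semiconj (List.flatMap f) (List.flatMap g) (List.flatMap h) := fun l => by
  simp only [List.flatMap_assoc, hf]

/-- The blocks `0`, `1 -1`, `1 0' -1`. -/
def block : Fin 3 → List (Fin 4)
  | 0 => [0]
  | 1 => [1, 3]
  | 2 => [1, 2, 3]

/-- `φ` read on the block alphabet. -/
def phiBlock : Fin 3 → List (Fin 3)
  | 0 => [0, 2]
  | 1 => [0, 1, 2, 1]
  | 2 => [0, 1, 2, 0, 2, 1]

theorem semiconj_block_phiBlock_phi :
    Semiconj (List.flatMap block) (List.flatMap phiBlock) (ext phi) :=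
  List.semiconj_flatMap (by decide)

theorem semiconj_tau_block_phiBlock_psi :
    Semiconj (List.flatMap fun b => (block b).map tau) (List.flatMap phiBlock) (extZ psi) :=
  List.semiconj_flatMap (by decide)

/-- `τ(φⁿ(0)) = ψⁿ(0)` for all `n ≥ 0`. -/
theorem stmt_7 : ∀ n : ℕ, ((ext phi)^[n] [0]).map tau = (extZ psi)^[n] [0] := by
  intro n
  calc ((ext phi)^[n] [0]).map tau
      = (((List.flatMap phiBlock)^[n] [0]).flatMap block).map tau :=
        congrArg _ (semiconj_block_phiBlock_phi.iterate_right n [0]).symm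
    _ = ((List.flatMap phiBlock)^[n] [0]).flatMap fun b => (block b).map tau :=
        List.map_flatMap ..
    _ = (extZ psi)^[n] [0] := semiconj_tau_block_phiBlock_psi.iterate_right n [0]
end

section
/- Let ψ be the morphism on {0, 1, −1} defined by ψ(0) = 0 1 0 −1, ψ(1) = 0 1 −1 1 0 −1, ψ(−1) = 1 −1, and let w = ψ^ω(0) be its infinite fixed point starting with 0. Then every partial sum of w lies in {0, 1}; that is, for every i ≥ 1, the sum of the first i entries of w is 0 or 1. -/
lemma block_sum (a : ℤ) : (psi a).sum = 0 := by
  unfold psi; split_ifs <;> norm_num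

lemma block_take (a : ℤ) (k : ℕ) :
    ((psi a).take k).sum = 0 ∨ ((psi a).take k).sum = 1 := by
  unfold psi; split_ifs <;>
    rcases k with _|_|_|_|_|_|_|k <;> simp [List.take]

lemma pref_sum (l : List ℤ) (k : ℕ) :
    ((extZ psi l).take k).sum = 0 ∨ ((extZ psi l).take k).sum = 1 := by
  induction l generalizing k with
  | nil => simp [extZ]
  | cons a t ih =>
    have h : extZ psi (a :: t) = psi a ++ extZ psi t := by simp [extZ]
    rw [h, List.take_append, List.sum_append]
    by_cases hk : k ≤ (psi a).length
    · have h0 : k - (psi a).length = 0 := by omega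
      rw [h0]; simpa using block_take a k
    · have h1 : (psi a).take k = psi a := List.take_of_length_le (by omega)
      rw [h1, block_sum]
      simpa using ih (k - (psi a).length)

lemma good_len (l : List ℤ) (hg : ∀ x ∈ l, x = 0 ∨ x = 1 ∨ x = -1) :
    2 * l.length ≤ (extZ psi l).length := by
  induction l with
  | nil => simp [extZ]
  | cons a t ih =>
    have h : extZ psi (a :: t) = psi a ++ extZ psi t := by simp [extZ]
    have ha : 2 ≤ (psi a).length := by
      rcases hg a (by simp) with h|h|h <;> simp [psi, h]
    have := ih (fun x hx => hg x (by simp [hx]))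
    rw [h, List.length_append]
    simp only [List.length_cons]; omega

lemma good_ext (l : List ℤ) (hg : ∀ x ∈ l, x = 0 ∨ x = 1 ∨ x = -1) :
    ∀ x ∈ extZ psi l, x = 0 ∨ x = 1 ∨ x = -1 := by
  intro x hx
  simp only [extZ, List.mem_flatMap] at hx
  obtain ⟨a, ha, hxa⟩ := hx
  rcases hg a ha with h|h|h <;> simp [psi, h] at hxa <;> tauto

lemma S_facts (n : ℕ) :
    (∀ x ∈ (extZ psi)^[n] [0], x = 0 ∨ x = 1 ∨ x = -1) ∧
      n + 1 ≤ ((extZ psi)^[n] [0]).length := by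
  induction n with
  | zero => simp
  | succ m ih =>
    rw [Function.iterate_succ_apply']
    refine ⟨good_ext _ ih.1, ?_⟩
    have := good_len _ ih.1
    omega

/-- Let `w = ψ^ω(0)` be the infinite fixed point of `ψ` starting with `0`
(i.e. the infinite word having every `ψⁿ(0)` as a prefix). Then every partial sum of `w`
is `0` or `1`. -/
theorem stmt_8 (w : ℕ → ℤ)
    (hw : ∀ n i : ℕ, ∀ h : i < ((extZ psi)^[n] [0]).length,
      w i = ((extZ psi)^[n] [0]).get ⟨i, h⟩) :
    ∀ i : ℕ, 1 ≤ i →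
      (∑ t ∈ Finset.range i, w t) = 0 ∨ (∑ t ∈ Finset.range i, w t) = 1 := by
  intro i _
  have hlen : i < ((extZ psi)^[i] [0]).length := by
    have := (S_facts i).2; omega
  have key : ∀ j, j ≤ i →
      (((extZ psi)^[i] [0]).take j).sum = ∑ t ∈ Finset.range j, w t := by
    intro j hj
    induction j with
    | zero => simp
    | succ m ih =>
      have hm : m < ((extZ psi)^[i] [0]).length := by omega
      rw [Finset.sum_range_succ, ← ih (by omega), hw i m hm,
        List.sum_take_succ _ _ hm]
      simp [List.get_eq_getElem]
  rw [← key i le_rfl]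
  obtain ⟨k, rfl⟩ : ∃ k, i = k + 1 := ⟨i - 1, by omega⟩
  rw [Function.iterate_succ_apply']
  exact pref_sum _ _
end

section
/- If p is a prime, then there exists a word over ℤ of length at least p² − p − 1 that avoids congruential 2-powers modulo p. -/
/-- Auxiliary prefix-sum function: `S n = 2 n² + m zⁿ`. -/
def auxS (m z : ℤ) (n : ℕ) : ℤ := 2 * (n : ℤ) ^ 2 + m * z ^ n

/-- The word: first differences of `auxS`. -/
def auxW (m z : ℤ) (t : ℕ) : ℤ := auxS m z (t + 1) - auxS m z t

lemma auxTel (m z : ℤ) (a b : ℕ) (h : a ≤ b) :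
    ∑ t ∈ Finset.Ico a b, auxW m z t = auxS m z b - auxS m z a := by
  rw [Finset.sum_Ico_eq_sub _ h]
  have h1 : ∀ n, ∑ t ∈ Finset.range n, auxW m z t = auxS m z n - auxS m z 0 :=
    fun n => Finset.sum_range_sub (auxS m z) n
  rw [h1, h1]; ring

lemma auxCast {p : ℕ} [NeZero p] (a b : ZMod p) (n : ℕ) :
    ((auxS (a.val : ℤ) (b.val : ℤ) n : ℤ) : ZMod p) = 2 * (n : ZMod p) ^ 2 + a * b ^ n := by
  unfold auxS
  push_cast
  simp [ZMod.natCast_val, ZMod.cast_id]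

/-- For every prime `p` there is a word over `ℤ` of length at least
`p² - p - 1` avoiding congruential 2-powers modulo `p`: no two adjacent equal-length
blocks have congruent sums modulo `p`. -/
theorem stmt_10 (p : ℕ) (hp : p.Prime) :
    ∃ w : ℕ → ℤ, ∀ i d : ℕ, 1 ≤ d → i + 2 * d ≤ p ^ 2 - p - 1 →
      ¬ ((∑ t ∈ Finset.Ico i (i + d), w t) ≡
          (∑ t ∈ Finset.Ico (i + d) (i + 2 * d), w t) [ZMOD (p : ℤ)]) := by
  rcases eq_or_ne p 2 with hp2 | hne2
  · subst hp2
    exact ⟨fun _ => 0, fun i d hd hle => by omega⟩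
  have hp3 : 3 ≤ p := by have := hp.two_le; rcases Nat.lt_or_ge p 3 with h | h <;> omega
  haveI : Fact p.Prime := ⟨hp⟩
  haveI : NeZero p := ⟨hp.pos.ne'⟩
  obtain ⟨g, hg⟩ := IsCyclic.exists_generator (α := (ZMod p)ˣ)
  have horder : orderOf g = p - 1 := by
    rw [orderOf_eq_card_of_forall_mem_zpowers hg, Nat.card_eq_fintype_card,
      ZMod.card_units_eq_totient, Nat.totient_prime hp]
  set gv : ZMod p := ((g : (ZMod p)ˣ) : ZMod p) with hgv
  have hgv0 : gv ≠ 0 := g.ne_zero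
  have h2ne : (2 : ZMod p) ≠ 0 := by
    have h22 : ((2 : ℕ) : ZMod p) ≠ 0 := by
      rw [Ne, ZMod.natCast_eq_zero_iff]
      intro h
      have := Nat.le_of_dvd (by norm_num) h
      omega
    simpa using h22
  refine ⟨auxW (((-gv : ZMod p).val : ℤ)) ((((gv ^ 2 : ZMod p)).val : ℤ)), ?_⟩
  intro i d hd hle hmod
  rw [auxTel _ _ i (i + d) (by omega), auxTel _ _ (i + d) (i + 2 * d) (by omega)] at hmod
  have hdvd := hmod.dvd
  have h00 := (ZMod.intCast_zmod_eq_zero_iff_dvd _ p).mpr hdvd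
  push_cast at h00
  have h0 : ((auxS (((-gv : ZMod p).val : ℤ)) ((((gv ^ 2 : ZMod p)).val : ℤ)) (i + 2 * d) : ℤ) : ZMod p)
      - 2 * ((auxS (((-gv : ZMod p).val : ℤ)) ((((gv ^ 2 : ZMod p)).val : ℤ)) (i + d) : ℤ) : ZMod p)
      + ((auxS (((-gv : ZMod p).val : ℤ)) ((((gv ^ 2 : ZMod p)).val : ℤ)) i : ℤ) : ZMod p) = 0 := by
    linear_combination h00
  rw [auxCast (-gv) (gv ^ 2), auxCast (-gv) (gv ^ 2), auxCast (-gv) (gv ^ 2)] at h0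
  push_cast at h0
  have key : (2 * (d : ZMod p)) ^ 2 + (-gv) * (gv ^ 2) ^ i * ((gv ^ 2) ^ d - 1) ^ 2 = 0 := by
    linear_combination h0
  by_cases hX : (gv ^ 2) ^ d = 1
  · -- ζ^d = 1 : then p ∣ d and (p-1) ∣ 2d, contradiction with the length bound
    have h4 : (2 * (d : ZMod p)) ^ 2 = 0 := by
      rw [hX] at key; simpa using key
    have h5 : 2 * (d : ZMod p) = 0 := by
      exact pow_eq_zero_iff (two_ne_zero) |>.mp h4
    have hD0 : (d : ZMod p) = 0 := by
      rcases mul_eq_zero.mp h5 with h | h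
      · exact absurd h h2ne
      · exact h
    have hpd : p ∣ d := (ZMod.natCast_eq_zero_iff d p).mp hD0
    have hgd : gv ^ (2 * d) = 1 := by rw [pow_mul]; exact hX
    have hgd' : g ^ (2 * d) = 1 := by
      apply Units.ext
      rw [Units.val_pow_eq_pow_val, Units.val_one, ← hgv]
      exact hgd
    have hdv1 : (p - 1) ∣ 2 * d := by
      have := orderOf_dvd_of_pow_eq_one hgd'
      rwa [horder] at this
    have hcop : Nat.Coprime (p - 1) p := by
      have hnd : ¬ p ∣ (p - 1) := by
        intro h
        have := Nat.le_of_dvd (by omega) h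
        omega
      exact ((hp.coprime_iff_not_dvd).mpr hnd).symm
    have hdvmul : (p - 1) * p ∣ 2 * d :=
      hcop.mul_dvd_of_dvd_of_dvd hdv1 (Dvd.dvd.mul_left hpd 2)
    have hles : (p - 1) * p ≤ 2 * d := Nat.le_of_dvd (by omega) hdvmul
    rw [pow_two] at hle
    have hmm : (p - 1) * p + p = p * p := by
      have h1 : 1 ≤ p := hp.one_lt.le
      calc (p - 1) * p + p = ((p - 1) + 1) * p := by ring
        _ = p * p := by rw [Nat.sub_add_cancel h1]
    have hpp1 : p + 1 ≤ p * p := by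
      calc p + 1 ≤ 2 * p := by omega
        _ ≤ p * p := Nat.mul_le_mul_right p hp.two_le
    obtain ⟨A, hA⟩ : ∃ A, p * p = A := ⟨_, rfl⟩
    obtain ⟨B, hB⟩ : ∃ B, (p - 1) * p = B := ⟨_, rfl⟩
    rw [hA] at hle hmm hpp1
    rw [hB] at hles hmm
    omega
  · have hXne : (gv ^ 2) ^ d - 1 ≠ 0 := sub_ne_zero.mpr hX
    by_cases hD : (d : ZMod p) = 0
    · -- p ∣ d but ζ^d ≠ 1 : the remaining product cannot vanish
      have hzero : (-gv) * (gv ^ 2) ^ i * ((gv ^ 2) ^ d - 1) ^ 2 = 0 := by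
        rw [hD] at key; simpa using key
      have hne : (-gv) * (gv ^ 2) ^ i * ((gv ^ 2) ^ d - 1) ^ 2 ≠ 0 :=
        mul_ne_zero (mul_ne_zero (neg_ne_zero.mpr hgv0)
          (pow_ne_zero _ (pow_ne_zero _ hgv0))) (pow_ne_zero _ hXne)
      exact hne hzero
    · -- main case: g would be a square, contradicting that g is a generator
      have hgsq : gv * ((gv ^ i) * ((gv ^ 2) ^ d - 1)) ^ 2 = (2 * (d : ZMod p)) ^ 2 := by
        linear_combination -key
      have h2D : 2 * (d : ZMod p) ≠ 0 := mul_ne_zero h2ne hD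
      have ht0 : (gv ^ i) * ((gv ^ 2) ^ d - 1) ≠ 0 :=
        mul_ne_zero (pow_ne_zero _ hgv0) hXne
      set y : ZMod p := (2 * (d : ZMod p)) * ((gv ^ i) * ((gv ^ 2) ^ d - 1))⁻¹ with hy
      have hy0 : y ≠ 0 := mul_ne_zero h2D (inv_ne_zero ht0)
      have hgy : gv = y ^ 2 := by
        rw [hy]
        field_simp
        linear_combination hgsq
      have hq2 : 2 * ((p - 1) / 2) = p - 1 := by
        have hodd : p % 2 = 1 := Nat.odd_iff.mp (hp.odd_of_ne_two hne2)
        omega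
      have hgq : gv ^ ((p - 1) / 2) = 1 := by
        calc gv ^ ((p - 1) / 2) = (y ^ 2) ^ ((p - 1) / 2) := by rw [hgy]
          _ = y ^ (2 * ((p - 1) / 2)) := by rw [← pow_mul]
          _ = y ^ (p - 1) := by rw [hq2]
          _ = 1 := ZMod.pow_card_sub_one_eq_one hy0
      have hgq' : g ^ ((p - 1) / 2) = 1 := by
        apply Units.ext
        rw [Units.val_pow_eq_pow_val, Units.val_one, ← hgv]
        exact hgq
      have hdvq : (p - 1) ∣ (p - 1) / 2 := by
        have := orderOf_dvd_of_pow_eq_one hgq'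
        rwa [horder] at this
      have hq0 : 0 < (p - 1) / 2 := by omega
      have := Nat.le_of_dvd hq0 hdvq
      omega
end

section
/- For every positive integer k, 𝓛(k) ≥ Ω(3, ⌊k/2⌋) − 1. -/
/-- A word `w` (restricted to positions `< n`) contains a congruential `t`-power modulo `k`:
`t` adjacent blocks of a common length `d ≥ 1`, all of whose sums are congruent mod `k`. -/
def ContainsCongPow (k t n : ℕ) (w : ℕ → ℕ) : Prop :=
  ∃ i d : ℕ, 1 ≤ d ∧ i + t * d ≤ n ∧
    ∀ j : ℕ, j < t →
      (∑ s ∈ Finset.Ico (i + j * d) (i + (j + 1) * d), w s) ≡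
        (∑ s ∈ Finset.Ico i (i + d), w s) [MOD k]

/-- `𝓛(k, t)`: the minimum `n` such that every word of length `n` over `{0, …, k-1}`
contains a congruential `t`-power modulo `k`. -/
noncomputable def Lfn (k t : ℕ) : ℕ :=
  sInf {n : ℕ | ∀ w : ℕ → ℕ, (∀ i, w i < k) → ContainsCongPow k t n w}

/-- `Ω(m, k)`: the smallest `n` such that every set `{x₁, …, xₙ}` with
`xᵢ ∈ [(i-1)k + 1, ik]` contains an `m`-term arithmetic progression. -/
noncomputable def Omega (m k : ℕ) : ℕ :=
  sInf {n : ℕ | ∀ x : ℕ → ℕ,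
    (∀ i : ℕ, 1 ≤ i → i ≤ n → (i - 1) * k + 1 ≤ x i ∧ x i ≤ i * k) →
    ∃ a d : ℕ, 1 ≤ d ∧ ∀ j : ℕ, j < m → ∃ i : ℕ, 1 ≤ i ∧ i ≤ n ∧ x i = a + j * d}

/-- `w₁(3, k)`: the minimum `n` such that every 2-coloring of `[1, n]` admits a
3-term arithmetic progression of the first color (`true`) or `k` consecutive integers
of the second color (`false`). -/
noncomputable def wOne (k : ℕ) : ℕ :=
  sInf {n : ℕ | ∀ χ : ℕ → Bool,
    (∃ a d : ℕ, 1 ≤ a ∧ 1 ≤ d ∧ a + 2 * d ≤ n ∧ ∀ j : ℕ, j < 3 → χ (a + j * d) = true) ∨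
    (∃ a : ℕ, 1 ≤ a ∧ a + (k - 1) ≤ n ∧ ∀ j : ℕ, j < k → χ (a + j) = false)}

/-- `w(ℓ; c)`: the van der Waerden number, the minimum `n` such that every `c`-coloring of
`[1, n]` admits a monochromatic `ℓ`-term arithmetic progression. -/
noncomputable def vdW (l c : ℕ) : ℕ :=
  sInf {n : ℕ | ∀ χ : ℕ → Fin c,
    ∃ a d : ℕ, 1 ≤ a ∧ 1 ≤ d ∧ a + (l - 1) * d ≤ n ∧
      ∀ j : ℕ, j < l → χ (a + j * d) = χ a}

/-! If `2m ≤ k` and `xᵢ ∈ [(i-1)m + 1, im]` for `i ≤ n + 1`, the gaps `x_{i+1} - xᵢ` lie in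
`[1, 2m - 1]` and so form a word of length `n` over `{0, …, k-1}`. A congruential square in that
word gives two adjacent runs of `d` gaps whose sums agree mod `k`; both sums lie in
`(dm - m, dm + m)`, so they are equal, and the three endpoints form a 3-term progression.
That `𝓛(k)` is finite at all follows from van der Waerden's theorem applied to the prefix sums
mod `k`, which in turn follows from the Hales–Jewett theorem by summing coordinates. -/

open Finset

namespace Combinatorics.Line

theorem sum_val_apply {ι : Type*} [Fintype ι] {n : ℕ} (l : Line (Fin (n + 1)) ι)
    (x : Fin (n + 1)) :
    ∑ i, (l x i : ℕ) = ∑ i, (l 0 i : ℕ) + x * #{i | l.idxFun i = none} := by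
  have hcoord : ∀ i, (l x i : ℕ) = l 0 i + x * if l.idxFun i = none then 1 else 0 := by
    intro i
    cases h : l.idxFun i <;> simp [h]
  rw [sum_congr rfl fun i _ => hcoord i, sum_add_distrib, ← mul_sum, sum_boole, Nat.cast_id]

end Combinatorics.Line

theorem exists_mono_arithmetic_progression (n : ℕ) (κ : Type*) [Finite κ] :
    ∃ N, ∀ C : ℕ → κ, ∃ a d, 0 < d ∧ a + n * d ≤ N ∧ ∀ j ≤ n, C (a + j * d) = C a := by
  obtain ⟨ι, _, hι⟩ := Combinatorics.Line.exists_mono_in_high_dimension (Fin (n + 1)) κ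
  refine ⟨n * Fintype.card ι, fun C => ?_⟩
  obtain ⟨l, c, hl⟩ := hι fun v => C (∑ i, (v i : ℕ))
  have hC (x : Fin (n + 1)) : C (∑ i, (l 0 i : ℕ) + x * #{i | l.idxFun i = none}) = c :=
    l.sum_val_apply x ▸ hl x
  refine ⟨∑ i, (l 0 i : ℕ), #{i | l.idxFun i = none},
    card_pos.2 ⟨_, mem_filter.2 ⟨mem_univ _, l.proper.choose_spec⟩⟩, ?_, fun j hj => ?_⟩
  · calc ∑ i, (l 0 i : ℕ) + n * #{i | l.idxFun i = none}
        = ∑ i, (l (Fin.last n) i : ℕ) := by rw [l.sum_val_apply (Fin.last n), Fin.val_last]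
      _ ≤ ∑ _i : ι, n := sum_le_sum fun i _ => Nat.le_of_lt_succ (l (Fin.last n) i).isLt
      _ = n * Fintype.card ι := by rw [sum_const, card_univ, smul_eq_mul, mul_comm]
  · have h0 := hC 0
    rw [Fin.val_zero, zero_mul, add_zero] at h0
    rw [h0, ← hC ⟨j, Nat.lt_succ_of_le hj⟩]

theorem exists_containsCongPow {k : ℕ} (hk : 0 < k) (t : ℕ) :
    ∃ N, ∀ w : ℕ → ℕ, ContainsCongPow k t N w := by
  obtain ⟨N, hN⟩ := exists_mono_arithmetic_progression t (Fin k)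
  refine ⟨N, fun w => ?_⟩
  obtain ⟨a, d, hd, hle, hmono⟩ := hN fun n => ⟨(∑ s ∈ range n, w s) % k, Nat.mod_lt _ hk⟩
  have hprefix (j : ℕ) (hj : j ≤ t) :
      ∑ s ∈ range (a + j * d), w s ≡ ∑ s ∈ range a, w s [MOD k] :=
    Fin.mk.inj (hmono j hj)
  have hblock (j : ℕ) (hj : j < t) :
      ∑ s ∈ Ico (a + j * d) (a + (j + 1) * d), w s ≡ 0 [MOD k] := by
    refine Nat.ModEq.add_left_cancel' (∑ s ∈ range (a + j * d), w s) ?_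
    rw [sum_range_add_sum_Ico _ (by gcongr; omega), add_zero]
    exact (hprefix (j + 1) hj).trans (hprefix j hj.le).symm
  refine ⟨a, d, hd, hle, fun j hj => (hblock j hj).trans ?_⟩
  simpa using (hblock 0 (by omega)).symm

theorem containsCongPow_lfn {k : ℕ} (hk : 0 < k) (t : ℕ) (w : ℕ → ℕ) (hw : ∀ i, w i < k) :
    ContainsCongPow k t (Lfn k t) w :=
  Nat.sInf_mem (s := {n | ∀ w : ℕ → ℕ, (∀ i, w i < k) → ContainsCongPow k t n w})
    (let ⟨N, hN⟩ := exists_containsCongPow hk t; ⟨N, fun w _ => hN w⟩) w hw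

def gapWord (n : ℕ) (y : ℕ → ℕ) (s : ℕ) : ℕ :=
  if s < n then y (s + 1) - y s else 0

theorem sum_Ico_gapWord {n : ℕ} {y : ℕ → ℕ} (hy : MonotoneOn y (Set.Iic n)) {a b : ℕ}
    (hab : a ≤ b) (hb : b ≤ n) : ∑ s ∈ Ico a b, gapWord n y s = y b - y a := by
  induction b, hab using Nat.le_induction with
  | base => simp
  | succ b hab ih =>
    have hb' : b < n := by omega
    have hab' : y a ≤ y b := hy (Set.mem_Iic.2 (by omega)) (Set.mem_Iic.2 hb'.le) hab
    have hstep : y b ≤ y (b + 1) := hy (Set.mem_Iic.2 hb'.le) (Set.mem_Iic.2 hb) b.le_succ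
    rw [sum_Ico_succ_top hab, ih hb'.le, gapWord, if_pos hb']
    omega

theorem monotoneOn_of_mem_blocks {m n : ℕ} {y : ℕ → ℕ}
    (hy : ∀ p ≤ n, p * m < y p ∧ y p ≤ p * m + m) : MonotoneOn y (Set.Iic n) := by
  intro a ha b hb hab
  obtain rfl | hab := hab.eq_or_lt
  · rfl
  have : a * m + m ≤ b * m := by simpa [add_mul] using Nat.mul_le_mul_right m hab
  have := hy a ha
  have := hy b hb
  omega

theorem exists_equal_gaps_of_containsCongPow {k m n : ℕ} (hm : 2 * m ≤ k) {y : ℕ → ℕ}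
    (hy : ∀ p ≤ n, p * m < y p ∧ y p ≤ p * m + m)
    (hL : ∀ w : ℕ → ℕ, (∀ i, w i < k) → ContainsCongPow k 2 n w) :
    ∃ i d, 0 < d ∧ i + 2 * d ≤ n ∧ y i < y (i + d) ∧
      y (i + 2 * d) - y (i + d) = y (i + d) - y i := by
  have hmono := monotoneOn_of_mem_blocks hy
  have hm0 : 0 < m := by have := hy 0 (Nat.zero_le n); omega
  have hgap (a d : ℕ) (had : a + d ≤ n) :
      d * m < y (a + d) - y a + m ∧ y (a + d) - y a < d * m + m := by
    have := hmono (Set.mem_Iic.2 (by omega)) (Set.mem_Iic.2 had) (a.le_add_right d)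
    have := hy a (by omega)
    have := hy (a + d) had
    rw [add_mul] at this
    omega
  have hw (s : ℕ) : gapWord n y s < k := by
    unfold gapWord
    split_ifs with hs
    · have := hgap s 1 hs
      omega
    · omega
  obtain ⟨i, d, hd, hle, hcong⟩ := hL _ hw
  have h1 := hcong 1 one_lt_two
  rw [one_mul, show (1 + 1) * d = d + d by ring, ← add_assoc,
    sum_Ico_gapWord hmono (by omega) (by omega), sum_Ico_gapWord hmono (by omega) (by omega)] at h1
  have hfirst := hgap i d (by omega)
  have hsecond := hgap (i + d) d (by omega)
  have := Nat.le_mul_of_pos_left m hd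
  refine ⟨i, d, hd, hle, by omega, ?_⟩
  rw [two_mul, ← add_assoc]
  refine h1.eq_of_abs_lt (abs_sub_lt_iff.2 ⟨?_, ?_⟩) <;> omega

theorem omega_three_le_succ {k m n : ℕ} (hm : 2 * m ≤ k)
    (hL : ∀ w : ℕ → ℕ, (∀ i, w i < k) → ContainsCongPow k 2 n w) : Omega 3 m ≤ n + 1 := by
  refine Nat.sInf_le fun x hx => ?_
  have hy (p : ℕ) (hp : p ≤ n) : p * m < x (p + 1) ∧ x (p + 1) ≤ p * m + m := by
    have := hx (p + 1) (by omega) (by omega)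
    rw [Nat.add_sub_cancel, add_mul, one_mul] at this
    omega
  obtain ⟨i, d, hd, hle, hlt, hequal⟩ := exists_equal_gaps_of_containsCongPow hm hy hL
  refine ⟨x (i + 1), x (i + d + 1) - x (i + 1), by omega, fun j hj => ?_⟩
  interval_cases j
  · exact ⟨i + 1, by omega, by omega, by simp⟩
  · exact ⟨i + d + 1, by omega, by omega, by omega⟩
  · exact ⟨i + 2 * d + 1, by omega, by omega, by omega⟩

/-- For every positive integer `k`, `𝓛(k) ≥ Ω(3, ⌊k/2⌋) - 1`. -/
theorem stmt_11 (k : ℕ) (hk : 1 ≤ k) : Omega 3 (k / 2) - 1 ≤ Lfn k 2 := by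
  have := omega_three_le_succ (m := k / 2) (by omega) (containsCongPow_lfn hk 2)
  omega
end

section
/- For every positive integer k, w₁(3, k) ≤ k · Ω(3, k). -/
lemma omega_set_nonempty (k : ℕ) (hk : 1 ≤ k) :
    {n : ℕ | ∀ x : ℕ → ℕ,
      (∀ i : ℕ, 1 ≤ i → i ≤ n → (i - 1) * k + 1 ≤ x i ∧ x i ≤ i * k) →
      ∃ a d : ℕ, 1 ≤ d ∧ ∀ j : ℕ, j < 3 → ∃ i : ℕ, 1 ≤ i ∧ i ≤ n ∧
        x i = a + j * d}.Nonempty := by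
  classical
  set N := max (cornersTheoremBound ((k:ℝ)⁻¹ / 3)) 1 with hN
  have hN1 : 1 ≤ N := le_max_right _ _
  refine ⟨N, ?_⟩
  intro x hx
  -- strict monotonicity of x on [1, N]
  have hmono : ∀ i j : ℕ, 1 ≤ i → i < j → j ≤ N → x i < x j := by
    intro i j hi hij hj
    have h1 := (hx i hi (by omega)).2
    have h2 := (hx j (by omega) hj).1
    have : i * k ≤ (j - 1) * k := Nat.mul_le_mul_right k (by omega)
    omega
  set A : Finset ℕ := (Finset.Icc 1 N).image (fun i => x i - 1) with hA
  have hinj : Set.InjOn (fun i => x i - 1) (Finset.Icc 1 N) := by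
    intro i hi j hj hij
    simp only [Finset.coe_Icc, Set.mem_Icc] at hi hj
    by_contra hne
    have hx1 := (hx i hi.1 hi.2).1
    have hxj1 := (hx j hj.1 hj.2).1
    rcases Nat.lt_or_ge i j with h | h
    · have := hmono i j hi.1 h hj.2
      simp only at hij; omega
    · have hij' : j < i := by omega
      have := hmono j i hj.1 hij' hi.2
      simp only at hij; omega
  have cardA : A.card = N := by
    rw [hA, Finset.card_image_of_injOn hinj, Nat.card_Icc]
    omega
  have hAsub : A ⊆ Finset.range (N * k) := by
    intro y hy
    simp only [hA, Finset.mem_image, Finset.mem_Icc] at hy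
    obtain ⟨i, ⟨hi1, hi2⟩, rfl⟩ := hy
    have h1 := (hx i hi1 hi2).1
    have h2 := (hx i hi1 hi2).2
    have : i * k ≤ N * k := Nat.mul_le_mul_right k hi2
    simp only [Finset.mem_range]
    omega
  have hnotAP : ¬ ThreeAPFree (A : Set ℕ) := by
    have hk0 : (0:ℝ) < (k:ℝ)⁻¹ := by
      rw [inv_pos]; exact_mod_cast hk
    refine roth_3ap_theorem_nat ((k:ℝ)⁻¹) hk0 ?_ A hAsub ?_
    · calc cornersTheoremBound ((k:ℝ)⁻¹ / 3) ≤ N := le_max_left _ _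
        _ ≤ N * k := Nat.le_mul_of_pos_right N (by omega)
    · rw [cardA]
      have hkne : (k:ℝ) ≠ 0 := by exact_mod_cast (by omega : k ≠ 0)
      rw [Nat.cast_mul]
      rw [mul_comm (N:ℝ) (k:ℝ), ← mul_assoc, inv_mul_cancel₀ hkne, one_mul]
  rw [ThreeAPFree] at hnotAP
  push_neg at hnotAP
  obtain ⟨a, ha, b, hb, c, hc, habc, hab⟩ := hnotAP
  -- a + c = b + b, a ≠ b. So {a, b, c} is a nontrivial 3-AP.
  have hmem : ∀ y : ℕ, y ∈ (A : Set ℕ) → ∃ i, 1 ≤ i ∧ i ≤ N ∧ x i = y + 1 := by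
    intro y hy
    simp only [hA, Finset.coe_image, Set.mem_image, Finset.coe_Icc, Set.mem_Icc] at hy
    obtain ⟨i, ⟨hi1, hi2⟩, rfl⟩ := hy
    have h1 := (hx i hi1 hi2).1
    exact ⟨i, hi1, hi2, by omega⟩
  obtain ⟨ia, hia1, hia2, hxa⟩ := hmem a ha
  obtain ⟨ib, hib1, hib2, hxb⟩ := hmem b hb
  obtain ⟨ic, hic1, hic2, hxc⟩ := hmem c hc
  rcases Nat.lt_or_ge a b with h | h
  · -- a < b < c, d = b - a
    refine ⟨a + 1, b - a, by omega, ?_⟩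
    intro j hj
    interval_cases j
    · exact ⟨ia, hia1, hia2, by omega⟩
    · exact ⟨ib, hib1, hib2, by omega⟩
    · exact ⟨ic, hic1, hic2, by omega⟩
  · -- c < b < a, d = b - c
    have hba : b < a := by omega
    refine ⟨c + 1, b - c, by omega, ?_⟩
    intro j hj
    interval_cases j
    · exact ⟨ic, hic1, hic2, by omega⟩
    · exact ⟨ib, hib1, hib2, by omega⟩
    · exact ⟨ia, hia1, hia2, by omega⟩

/-- For every positive integer `k`, `w₁(3, k) ≤ k · Ω(3, k)`. -/
theorem stmt_12 (k : ℕ) (hk : 1 ≤ k) : wOne k ≤ k * Omega 3 k := by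
  classical
  have hNmem : ∀ x : ℕ → ℕ,
      (∀ i : ℕ, 1 ≤ i → i ≤ Omega 3 k → (i - 1) * k + 1 ≤ x i ∧ x i ≤ i * k) →
      ∃ a d : ℕ, 1 ≤ d ∧ ∀ j : ℕ, j < 3 → ∃ i : ℕ, 1 ≤ i ∧ i ≤ Omega 3 k ∧
        x i = a + j * d :=
    Nat.sInf_mem (omega_set_nonempty k hk)
  set N := Omega 3 k with hNdef
  clear_value N
  -- hNmem : N satisfies the Omega property
  apply Nat.sInf_le
  simp only [Set.mem_setOf_eq]
  intro χ
  by_cases hF : ∃ a : ℕ, 1 ≤ a ∧ a + (k - 1) ≤ k * N ∧ ∀ j : ℕ, j < k → χ (a + j) = false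
  · exact Or.inr hF
  · left
    push_neg at hF
    have hik : ∀ i : ℕ, 1 ≤ i → (i - 1) * k + k = i * k := by
      intro i hi
      cases i with
      | zero => omega
      | succ n => simp [Nat.succ_sub_one, Nat.succ_mul]
    -- each block [(i-1)k+1, ik] has a true element; package as a total choice
    have hblock : ∀ i : ℕ, ∃ y : ℕ, 1 ≤ i → i ≤ N →
        (i - 1) * k + 1 ≤ y ∧ y ≤ i * k ∧ χ y = true := by
      intro i
      by_cases hi : 1 ≤ i ∧ i ≤ N
      · obtain ⟨hi1, hi2⟩ := hi
        have hik' := hik i hi1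
        have hNk : i * k ≤ N * k := Nat.mul_le_mul_right k hi2
        have hcm : k * N = N * k := Nat.mul_comm k N
        by_cases hex : ∃ y, (i - 1) * k + 1 ≤ y ∧ y ≤ i * k ∧ χ y = true
        · obtain ⟨y, h⟩ := hex
          exact ⟨y, fun _ _ => h⟩
        · exfalso
          push_neg at hex
          obtain ⟨j, hj, hjc⟩ := hF ((i - 1) * k + 1) (by omega) (by omega)
          rw [Bool.ne_false_iff] at hjc
          exact absurd hjc (hex _ (by omega) (by omega))
      · exact ⟨0, fun h1 h2 => absurd ⟨h1, h2⟩ hi⟩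
    choose x hxall using hblock
    have hxprop : ∀ i : ℕ, 1 ≤ i → i ≤ N → (i - 1) * k + 1 ≤ x i ∧ x i ≤ i * k := by
      intro i hi1 hi2
      exact ⟨(hxall i hi1 hi2).1, (hxall i hi1 hi2).2.1⟩
    obtain ⟨a, d, hd, hap⟩ := hNmem x hxprop
    have hga : 1 ≤ a := by
      obtain ⟨i, hi1, hi2, hxi⟩ := hap 0 (by norm_num)
      have h0 := (hxprop i hi1 hi2).1
      omega
    have hg2 : a + 2 * d ≤ k * N := by
      obtain ⟨i, hi1, hi2, hxi⟩ := hap 2 (by norm_num)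
      have h1 := (hxprop i hi1 hi2).2
      have h2 : i * k ≤ N * k := Nat.mul_le_mul_right k hi2
      have hcm : k * N = N * k := Nat.mul_comm k N
      omega
    refine ⟨a, d, hga, hd, hg2, fun j hj => ?_⟩
    obtain ⟨i, hi1, hi2, hxi⟩ := hap j hj
    rw [← hxi]
    exact (hxall i hi1 hi2).2.2
end

section
/- There exists a constant c > 0 such that, for all sufficiently large k, 𝓛(k) > k^{c log k}. -/
/-!
Behrend's construction. Let `A ⊆ [0, N)` be 3AP-free with `#A = r₃(N)`. Some translate of `A`
meets any `S ⊆ [0, N)` in a 3AP-free set of size at least `#A #S / 2N`, so greedily `[0, N)` splits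
into `r ≈ (2N / r₃(N)) log N` 3AP-free classes. Label the classes injectively by elements of a
3AP-free set `V ⊆ [0, k/2)` and let `g x` be the label of `x`. The word of differences of `g`
modulo `k` has a congruential square at `(i, d)` only if `g i + g (i + 2d) = 2 g (i + d)` (labels
are below `k / 2`, so nothing wraps around), which forces `i`, `i + d`, `i + 2d` into a single
class. Behrend's bound `r₃(n) ≥ n exp (-4 √(log n))`, applied to `N` and to `k / 2`, allows
`N ≈ exp (log² k / 100)`.
-/

open Finset Real

theorem exists_threeAPFree_subset_card_mul_le {N : ℕ} {A S : Finset ℕ} (hA : A ⊆ range N)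
    (hA3 : ThreeAPFree (A : Set ℕ)) (hS : S ⊆ range N) :
    ∃ F ⊆ S, ThreeAPFree (F : Set ℕ) ∧ #A * #S ≤ 2 * N * #F := by
  classical
  rcases Nat.eq_zero_or_pos N with rfl | hN
  · refine ⟨∅, empty_subset _, by simp, ?_⟩
    simp [subset_empty.1 (range_zero ▸ hS)]
  -- Pigeonhole over the `2N` shifts `s - a`: the pairs `(s, a)` with a given shift form the
  -- graph of a translation from part of `S` into `A`, hence a 3AP-free part of `S`.
  set shift : ℕ × ℕ → ℕ := fun p => p.1 + N - p.2
  have hmaps : ∀ p ∈ S ×ˢ A, shift p ∈ range (2 * N) := by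
    intro p hp
    have := mem_range.1 (hS (mem_product.1 hp).1)
    simp only [shift, mem_range]
    omega
  obtain ⟨t, -, ht⟩ := exists_le_of_sum_le (s := range (2 * N)) (f := fun _ => #A * #S)
      (g := fun t => 2 * N * #{p ∈ S ×ˢ A | shift p = t}) (nonempty_range_iff.2 (by omega))
      (by rw [sum_const, card_range, smul_eq_mul, ← mul_sum,
            ← card_eq_sum_card_fiberwise hmaps, card_product, mul_comm #S, mul_comm])
  have hshift : ∀ p ∈ S ×ˢ A, shift p = t → p.1 + N = p.2 + t := by
    intro p hp hpt
    have := mem_range.1 (hA (mem_product.1 hp).2)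
    simp only [shift] at hpt
    omega
  refine ⟨{p ∈ S ×ˢ A | shift p = t}.image Prod.fst, ?_, ?_, ?_⟩
  · intro s hs
    obtain ⟨p, hp, rfl⟩ := mem_image.1 hs
    exact (mem_product.1 (mem_filter.1 hp).1).1
  · intro x hx y hy z hz hxyz
    simp only [coe_image, coe_filter, Set.mem_image, Set.mem_ofPred_eq] at hx hy hz
    obtain ⟨p, ⟨hp, hpt⟩, rfl⟩ := hx
    obtain ⟨q, ⟨hq, hqt⟩, rfl⟩ := hy
    obtain ⟨u, ⟨hu, hut⟩, rfl⟩ := hz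
    have := hA3 (mem_product.1 hp).2 (mem_product.1 hq).2 (mem_product.1 hu).2
    have := hshift p hp hpt; have := hshift q hq hqt; have := hshift u hu hut
    omega
  · rwa [card_image_of_injOn]
    intro p hp q hq hpq
    have := hshift p (mem_filter.1 hp).1 (mem_filter.1 hp).2
    have := hshift q (mem_filter.1 hq).1 (mem_filter.1 hq).2
    exact Prod.ext hpq (by omega)

theorem exists_coloring_of_forall_exists_large_subset {α ι : Type*} [DecidableEq α]
    [DecidableEq ι] [Nonempty ι] {P : Finset α → Prop} (hP : ∀ ⦃s t⦄, s ⊆ t → P t → P s)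
    {U : Finset α} {a M : ℕ} (hstep : ∀ S ⊆ U, ∃ F ⊆ S, P F ∧ a * #S ≤ M * #F)
    (C : Finset ι) (hC : (M - a) ^ #C * #U < M ^ #C) :
    ∃ col : α → ι, (∀ x ∈ U, col x ∈ C) ∧ ∀ c, P {x ∈ U | col x = c} := by
  have hP0 : P ∅ := by
    obtain ⟨F, -, hPF, -⟩ := hstep ∅ (empty_subset _)
    exact hP (empty_subset _) hPF
  suffices ∀ S ⊆ U, (M - a) ^ #C * #S < M ^ #C →
      ∃ col : α → ι, (∀ x ∈ S, col x ∈ C) ∧ ∀ c, P {x ∈ S | col x = c} from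
    this U subset_rfl hC
  clear hC
  induction C using Finset.induction_on with
  | empty =>
    intro S _ hS
    obtain rfl : S = ∅ := card_eq_zero.1 (by simpa using hS)
    exact ⟨fun _ => Classical.arbitrary ι, by simp, by simpa using hP0⟩
  | insert c C hc ih =>
    intro S hSU hS
    rw [card_insert_of_notMem hc] at hS
    obtain ⟨F, hFS, hPF, hF⟩ := hstep S hSU
    have hrest : M * #(S \ F) ≤ (M - a) * #S := by
      rw [card_sdiff_of_subset hFS, Nat.mul_sub, Nat.sub_mul]
      exact tsub_le_tsub_left hF _
    obtain ⟨col, hcol, hPcol⟩ := ih (S \ F) (sdiff_subset.trans hSU) <| by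
      refine Nat.lt_of_mul_lt_mul_left (a := M) ?_
      calc M * ((M - a) ^ #C * #(S \ F)) = (M - a) ^ #C * (M * #(S \ F)) := by ring
        _ ≤ (M - a) ^ #C * ((M - a) * #S) := Nat.mul_le_mul_left _ hrest
        _ = (M - a) ^ (#C + 1) * #S := by ring
        _ < M ^ (#C + 1) := hS
        _ = M * M ^ #C := by ring
    refine ⟨fun x => if x ∈ F then c else col x, ?_, fun c' => ?_⟩
    · intro x hx
      dsimp only
      split_ifs with hxF
      · exact mem_insert_self c C
      · exact mem_insert_of_mem (hcol x (mem_sdiff.2 ⟨hx, hxF⟩))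
    · by_cases hc' : c' = c
      · refine hP (fun x hx => ?_) hPF
        obtain ⟨hxS, hxc⟩ := mem_filter.1 hx
        by_contra hxF
        simp only [hxF, if_false, hc'] at hxc
        exact hc (hxc ▸ hcol x (mem_sdiff.2 ⟨hxS, hxF⟩))
      · refine hP (fun x hx => ?_) (hPcol c')
        obtain ⟨hxS, hxc⟩ := mem_filter.1 hx
        dsimp only at hxc
        split_ifs at hxc with hxF
        · exact absurd hxc.symm hc'
        · exact mem_filter.2 ⟨mem_sdiff.2 ⟨hxS, hxF⟩, hxc⟩

theorem sub_pow_mul_lt_pow {M a n r : ℕ} (ha : a ≤ M) (hn : 0 < n)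
    (h : M * log n < r * a) : (M - a) ^ r * n < M ^ r := by
  have hM : (0 : ℝ) < M := by
    rcases Nat.eq_zero_or_pos M with rfl | hM
    · obtain rfl : a = 0 := Nat.le_zero.1 ha
      simp at h
    · exact_mod_cast hM
  have hsub : (M : ℝ) - a ≤ M * exp (-(a / M)) := by
    calc (M : ℝ) - a = M * (-(a / M) + 1) := by field_simp; ring
      _ ≤ M * exp (-(a / M)) := by gcongr; exact add_one_le_exp _
  have hexp : n * exp (-(r * (a / M))) < 1 := by
    rw [exp_neg, mul_inv_lt_iff₀ (exp_pos _), one_mul, ← log_lt_iff_lt_exp (by positivity),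
      ← mul_div_assoc, lt_div_iff₀ hM, mul_comm]
    exact h
  rw [← Nat.cast_lt (α := ℝ)]
  push_cast [Nat.cast_sub ha]
  calc ((M : ℝ) - a) ^ r * n ≤ (M * exp (-(a / M))) ^ r * n := by
        gcongr
        exact sub_nonneg.2 (by exact_mod_cast ha)
    _ = M ^ r * (n * exp (-(r * (a / M)))) := by
        rw [mul_pow, ← exp_nat_mul]
        ring_nf
    _ < M ^ r := mul_lt_of_lt_one_right (by positivity) hexp

theorem exists_forall_exists_monochromatic_arithProg (m : ℕ) (κ : Type*) [Finite κ] :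
    ∃ n, ∀ C : ℕ → κ, ∃ a d, 0 < d ∧ a + m * d ≤ n ∧ ∀ j ≤ m, C (a + j * d) = C a := by
  classical
  obtain ⟨ι, _, hι⟩ := Combinatorics.Line.exists_mono_in_high_dimension (Fin (m + 1)) κ
  refine ⟨m * Fintype.card ι, fun C => ?_⟩
  -- A combinatorial line in `Fin (m + 1) ^ ι` has coordinate sums in arithmetic progression,
  -- with common difference the number of moving coordinates.
  set σ : (ι → Fin (m + 1)) → ℕ := fun v => ∑ i, (v i : ℕ)
  obtain ⟨l, c, hl⟩ := hι (C ∘ σ)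
  set moving : Finset ι := {i | l.idxFun i = none}
  have hσ : ∀ x : Fin (m + 1), σ (l x) = σ (l 0) + x * #moving := by
    intro x
    simp only [σ, moving, card_filter, mul_sum, ← sum_add_distrib]
    refine sum_congr rfl fun i _ => ?_
    cases h : l.idxFun i <;> simp [h]
  refine ⟨σ (l 0), #moving, card_pos.2 ⟨_, mem_filter.2 ⟨mem_univ _, l.proper.choose_spec⟩⟩,
    ?_, fun j hj => ?_⟩
  · calc σ (l 0) + m * #moving = σ (l (Fin.last m)) := by rw [hσ (Fin.last m), Fin.val_last]
      _ ≤ ∑ _i : ι, m := sum_le_sum fun i _ => Nat.lt_succ_iff.1 (l (Fin.last m) i).isLt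
      _ = m * Fintype.card ι := by rw [sum_const, card_univ, smul_eq_mul, mul_comm]
  · have h := (hl ⟨j, Nat.lt_succ_of_le hj⟩).trans (hl 0).symm
    rwa [Function.comp_apply, hσ] at h

theorem ContainsCongPow.mono {k t m n : ℕ} {w : ℕ → ℕ} (h : ContainsCongPow k t m w)
    (hmn : m ≤ n) : ContainsCongPow k t n w :=
  let ⟨i, d, hd, hi, hw⟩ := h
  ⟨i, d, hd, hi.trans hmn, hw⟩

-- Without it `Lfn k t` would be the junk value `sInf ∅ = 0`.
theorem exists_forall_containsCongPow (k t : ℕ) [NeZero k] :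
    ∃ n, ∀ w : ℕ → ℕ, ContainsCongPow k t n w := by
  obtain ⟨n, hn⟩ := exists_forall_exists_monochromatic_arithProg t (ZMod k)
  refine ⟨n, fun w => ?_⟩
  -- Every block between equal prefix sums modulo `k` has sum `0` modulo `k`.
  obtain ⟨i, d, hd, hn, hP⟩ := hn fun j => ((∑ s ∈ range j, w s : ℕ) : ZMod k)
  have hblock : ∀ j < t, ((∑ s ∈ Ico (i + j * d) (i + (j + 1) * d), w s : ℕ) : ZMod k) = 0 := by
    intro j hj
    rw [Nat.cast_sum, sum_Ico_eq_sub _ (by nlinarith), ← Nat.cast_sum, ← Nat.cast_sum,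
      hP _ hj, hP _ hj.le, sub_self]
  refine ⟨i, d, hd, hn, fun j hj => ?_⟩
  rw [← ZMod.natCast_eq_natCast_iff, hblock j hj]
  simpa using (hblock 0 (by omega)).symm

theorem lt_Lfn_of_not_containsCongPow {k t n : ℕ} [NeZero k] {w : ℕ → ℕ} (hw : ∀ i, w i < k)
    (hn : ¬ContainsCongPow k t n w) : n < Lfn k t := by
  by_contra! h
  obtain ⟨m, hm⟩ := exists_forall_containsCongPow k t
  exact hn ((Nat.sInf_mem (s := {n | ∀ w : ℕ → ℕ, (∀ i, w i < k) → ContainsCongPow k t n w})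
    ⟨m, fun w _ => hm w⟩ w hw).mono h)

def diffWord (k : ℕ) (g : ℕ → ℕ) (i : ℕ) : ℕ := ((g (i + 1) : ZMod k) - g i).val

theorem diffWord_lt (k : ℕ) [NeZero k] (g : ℕ → ℕ) (i : ℕ) : diffWord k g i < k :=
  ZMod.val_lt _

theorem cast_sum_Ico_diffWord {k u v : ℕ} [NeZero k] (g : ℕ → ℕ) (huv : u ≤ v) :
    ((∑ s ∈ Ico u v, diffWord k g s : ℕ) : ZMod k) = g v - g u := by
  simp only [diffWord, Nat.cast_sum, ZMod.natCast_val, ZMod.cast_id', id]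
  exact sum_Ico_sub (fun s => (g s : ZMod k)) huv

theorem not_containsCongPow_diffWord {k n : ℕ} [NeZero k] {g : ℕ → ℕ} {V : Set ℕ}
    (hV : ThreeAPFree V) (hgV : ∀ x ≤ n, g x ∈ V) (hgk : ∀ x ≤ n, 2 * g x < k)
    (hfib : ∀ v, ThreeAPFree {x | x ≤ n ∧ g x = v}) :
    ¬ContainsCongPow k 2 n (diffWord k g) := by
  rintro ⟨i, d, hd, hn, h⟩
  have hmod : g i + g (i + 2 * d) ≡ g (i + d) + g (i + d) [MOD k] := by
    have h1 := h 1 one_lt_two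
    rw [← ZMod.natCast_eq_natCast_iff, cast_sum_Ico_diffWord _ (by omega),
      cast_sum_Ico_diffWord _ (by omega)] at h1
    rw [← ZMod.natCast_eq_natCast_iff]
    push_cast
    ring_nf at h1 ⊢
    linear_combination h1
  have hx := hgk i (by omega)
  have hy := hgk (i + d) (by omega)
  have hz := hgk (i + 2 * d) (by omega)
  have heq := hmod.eq_of_lt_of_lt (by omega) (by omega)
  have hxy : g i = g (i + d) :=
    hV (hgV i (by omega)) (hgV (i + d) (by omega)) (hgV (i + 2 * d) (by omega)) heq
  have := hfib (g (i + d)) ⟨by omega, hxy⟩ ⟨by omega, rfl⟩ ⟨by omega, by omega⟩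
    (show i + (i + 2 * d) = i + d + (i + d) by ring)
  omega

theorem le_Lfn_two {k N r : ℕ} [NeZero k]
    (hdecay : (2 * N - rothNumberNat N) ^ r * N < (2 * N) ^ r)
    (hr : r ≤ rothNumberNat (k / 2)) : N ≤ Lfn k 2 := by
  rcases Nat.eq_zero_or_pos N with rfl | hN
  · exact Nat.zero_le _
  obtain ⟨A, hA, hAcard, hA3⟩ := rothNumberNat_spec N
  obtain ⟨V, hV, hVcard, hV3⟩ := rothNumberNat_spec (k / 2)
  obtain ⟨C, hCV, hC⟩ := exists_subset_card_eq (hVcard ▸ hr)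
  obtain ⟨g, hgC, hfib⟩ := exists_coloring_of_forall_exists_large_subset
    (P := fun F : Finset ℕ => ThreeAPFree (F : Set ℕ)) (U := range N)
    (fun s t hst ht => ht.mono (coe_subset.2 hst))
    (fun S hS => exists_threeAPFree_subset_card_mul_le hA hA3 hS) C
    (by rwa [hAcard, hC, card_range])
  have hgV : ∀ x ≤ N - 1, g x ∈ V := fun x hx => hCV (hgC x (mem_range.2 (by omega)))
  have hgk : ∀ x ≤ N - 1, 2 * g x < k := fun x hx => by
    have := mem_range.1 (hV (hgV x hx))
    omega
  have hfib' : ∀ v, ThreeAPFree {x | x ≤ N - 1 ∧ g x = v} := fun v =>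
    (hfib v).mono fun x ⟨hx, hgx⟩ => by
      simp only [coe_filter, mem_range, Set.mem_ofPred_eq]
      exact ⟨by omega, hgx⟩
  have := lt_Lfn_of_not_containsCongPow (diffWord_lt k g)
    (not_containsCongPow_diffWord hV3 hgV hgk hfib')
  omega

theorem exists_nat_exp_lt_log_le {y : ℝ} (hy : 0 ≤ y) : ∃ N : ℕ, exp y < N ∧ log N ≤ y + 1 := by
  refine ⟨⌊exp y⌋₊ + 1, by exact_mod_cast Nat.lt_floor_add_one _, ?_⟩
  rw [log_le_iff_le_exp (by positivity), exp_add, Nat.cast_add_one]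
  have := Nat.floor_le (exp_pos y).le
  nlinarith [one_le_exp hy, exp_one_gt_two]

theorem sq_le_exp_div_eight {x : ℝ} (hx : 3072 ≤ x) : x ^ 2 ≤ exp (x / 8) := by
  have := pow_div_factorial_le_exp (x := x / 8) (by positivity) 3
  norm_num [Nat.factorial] at this
  nlinarith

theorem exp_half_mul_sq_add_one_le {x : ℝ} (hx : 4096 ≤ x) :
    exp (x / 2) * x ^ 2 / 32 + 1 ≤ exp x * exp (-4 * √x) / 3 := by
  have hsqrt : 64 ≤ √x := by
    simpa [show √4096 = 64 by rw [show (4096 : ℝ) = 64 ^ 2 by norm_num, sqrt_sq (by norm_num)]]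
      using sqrt_le_sqrt hx
  have hx_eq : √x * √x = x := mul_self_sqrt (by linarith)
  have hpow : exp (x / 2) * x ^ 2 ≤ exp (5 * x / 8) := by
    calc exp (x / 2) * x ^ 2 ≤ exp (x / 2) * exp (x / 8) := by
          gcongr; exact sq_le_exp_div_eight (by linarith)
      _ = exp (5 * x / 8) := by rw [← exp_add]; ring_nf
  have hsix : 6 ≤ exp (5 * x / 16) := by linarith [add_one_le_exp (5 * x / 16)]
  have hgap : exp (5 * x / 8) * exp (5 * x / 16) ≤ exp x * exp (-4 * √x) := by
    rw [← exp_add, ← exp_add]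
    exact exp_le_exp.2 (by nlinarith)
  nlinarith [one_le_exp (show 0 ≤ 5 * x / 8 by linarith)]

theorem mul_exp_div_three_le_rothNumberNat_half {k : ℕ} (hk : 2 ≤ k) :
    k * exp (-4 * √(log k)) / 3 ≤ rothNumberNat (k / 2) := by
  have hhalf : (k : ℝ) / 3 ≤ (k / 2 : ℕ) := by
    rw [div_le_iff₀ (by norm_num)]
    have : k ≤ k / 2 * 3 := by omega
    exact_mod_cast this
  have hpos : (0 : ℝ) < (k / 2 : ℕ) := by
    have : 0 < k / 2 := by omega
    exact_mod_cast this
  calc k * exp (-4 * √(log k)) / 3 = k / 3 * exp (-4 * √(log k)) := by ring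
    _ ≤ (k / 2 : ℕ) * exp (-4 * √(log (k / 2 : ℕ))) := by
        refine mul_le_mul hhalf (exp_le_exp.2 ?_) (exp_pos _).le hpos.le
        have := sqrt_le_sqrt (log_le_log hpos (Nat.cast_le.2 (Nat.div_le_self k 2)))
        linarith
    _ ≤ rothNumberNat (k / 2) := Behrend.roth_lower_bound

theorem exists_exp_lt_two_mul_log_lt_mul_rothNumberNat {x : ℝ} (hx : 4096 ≤ x) :
    ∃ N r : ℕ, exp (x ^ 2 / 100) < N ∧ 2 * N * log N < r * rothNumberNat N ∧
      (r : ℝ) ≤ exp (x / 2) * x ^ 2 / 32 + 1 := by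
  obtain ⟨N, hN, hlogN⟩ := exists_nat_exp_lt_log_le (y := x ^ 2 / 100) (by positivity)
  replace hlogN : log N ≤ x ^ 2 / 64 := hlogN.trans (by nlinarith)
  have hN0 : (0 : ℝ) < N := (exp_pos _).trans hN
  have hlogN0 : 0 ≤ log N := log_nonneg (by linarith [one_le_exp (by positivity : 0 ≤ x ^ 2 / 100)])
  have hsqrt : √(log N) ≤ x / 8 := sqrt_le_iff.2 ⟨by positivity, by linarith⟩
  set a := rothNumberNat N
  have ha : N * exp (-(x / 2)) ≤ a :=
    le_trans (by gcongr; linarith) Behrend.roth_lower_bound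
  have ha0 : (0 : ℝ) < a := lt_of_lt_of_le (by positivity) ha
  have hNa : N / a ≤ exp (x / 2) := by
    rw [div_le_iff₀ ha0]
    calc (N : ℝ) = N * exp (-(x / 2)) * exp (x / 2) := by rw [mul_assoc, ← exp_add]; simp
      _ ≤ exp (x / 2) * a := by rw [mul_comm]; gcongr
  refine ⟨N, ⌊2 * (N : ℝ) * log N / a⌋₊ + 1, hN, ?_, ?_⟩
  · rw [← div_lt_iff₀ ha0, Nat.cast_add_one]
    exact Nat.lt_floor_add_one _
  · rw [Nat.cast_add_one]
    gcongr
    calc (⌊2 * (N : ℝ) * log N / a⌋₊ : ℝ) ≤ 2 * (N / a) * log N := by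
          rw [mul_div_assoc', div_mul_eq_mul_div]; exact Nat.floor_le (by positivity)
      _ ≤ 2 * exp (x / 2) * (x ^ 2 / 64) := by gcongr
      _ = exp (x / 2) * x ^ 2 / 32 := by ring

/-- There is a constant `c > 0` such that `𝓛(k) > k^(c log k)`
for all sufficiently large `k`. -/
theorem stmt_14 : ∃ c : ℝ, 0 < c ∧ ∃ K : ℕ, ∀ k : ℕ, K ≤ k →
    (k : ℝ) ^ (c * Real.log k) < (Lfn k 2 : ℝ) := by
  refine ⟨1 / 100, by norm_num, ⌈exp 4096⌉₊, fun k hk => ?_⟩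
  have hk : exp 4096 ≤ k := Nat.ceil_le.1 hk
  have hk0 : (0 : ℝ) < k := (exp_pos _).trans_le hk
  have hx : 4096 ≤ log k := (le_log_iff_exp_le hk0).2 hk
  have hk2 : 2 ≤ k := by
    have : (2 : ℝ) ≤ k := le_trans (by linarith [add_one_le_exp 4096]) hk
    exact_mod_cast this
  have : NeZero k := ⟨by omega⟩
  obtain ⟨N, r, hN, hdecay, hr⟩ := exists_exp_lt_two_mul_log_lt_mul_rothNumberNat hx
  have hrk : r ≤ rothNumberNat (k / 2) := by
    have hbound := exp_half_mul_sq_add_one_le hx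
    rw [exp_log hk0] at hbound
    exact_mod_cast hr.trans (hbound.trans (mul_exp_div_three_le_rothNumberNat_half hk2))
  have hLfn : N ≤ Lfn k 2 := le_Lfn_two (sub_pow_mul_lt_pow
    ((rothNumberNat_le N).trans (by omega)) (by exact_mod_cast (exp_pos _).trans hN)
    (by push_cast; exact hdecay)) hrk
  calc (k : ℝ) ^ (1 / 100 * log k) = exp (log k ^ 2 / 100) := by
        rw [rpow_def_of_pos hk0]; ring_nf
    _ < N := hN
    _ ≤ Lfn k 2 := by exact_mod_cast hLfn
end

section
/- For all positive integers k and t, 𝓛(k, t) ≥ Ω(t + 1, ⌊k/2⌋) − 1. -/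
lemma ccp_congr {k t n : ℕ} {w₁ w₂ : ℕ → ℕ} (h : ∀ s, s < n → w₁ s = w₂ s)
    (hc : ContainsCongPow k t n w₁) (ht : 1 ≤ t) : ContainsCongPow k t n w₂ := by
  obtain ⟨i, d, hd, hn, hcong⟩ := hc
  refine ⟨i, d, hd, hn, fun j hj => ?_⟩
  have hkey : ∀ u v : ℕ, v ≤ n → (∑ s ∈ Finset.Ico u v, w₁ s) = ∑ s ∈ Finset.Ico u v, w₂ s := by
    intro u v hv
    refine Finset.sum_congr rfl fun s hs => h s ?_
    exact lt_of_lt_of_le (Finset.mem_Ico.mp hs).2 hv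
  have h1 : i + (j + 1) * d ≤ n := by
    have : (j+1) * d ≤ t * d := Nat.mul_le_mul_right d (by omega)
    omega
  have h2 : i + d ≤ n := by
    have : 1 * d ≤ t * d := Nat.mul_le_mul_right d ht
    omega
  rw [← hkey _ _ h1, ← hkey _ _ h2]
  exact hcong j hj

lemma ccp_mono {k t n n' : ℕ} {w : ℕ → ℕ} (h : n ≤ n') (hc : ContainsCongPow k t n w) :
    ContainsCongPow k t n' w := by
  obtain ⟨i, d, hd, hn, hcong⟩ := hc
  exact ⟨i, d, hd, le_trans hn h, hcong⟩

lemma sum_Ico_telescope (x w : ℕ → ℕ) (n : ℕ)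
    (hw : ∀ s, s < n → w s + x (s+1) = x (s+2)) :
    ∀ u v, u ≤ v → v ≤ n → (∑ s ∈ Finset.Ico u v, w s) + x (u+1) = x (v+1) := by
  intro u v huv hvn
  induction v, huv using Nat.le_induction with
  | base => simp
  | succ v huv ih =>
    rw [Finset.sum_Ico_succ_top huv]
    have h1 := hw v (by omega)
    have h2 := ih (by omega)
    have h3 : x (v+1+1) = x (v+2) := rfl
    omega


open Finset in
lemma lfn_set_nonempty (k t : ℕ) (hk : 1 ≤ k) (ht : 1 ≤ t) :
    {n : ℕ | ∀ w : ℕ → ℕ, (∀ i, w i < k) → ContainsCongPow k t n w}.Nonempty := by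
  by_contra hE
  have hbad : ∀ n : ℕ, ∃ w : ℕ → ℕ, (∀ i, w i < k) ∧ ¬ContainsCongPow k t n w := by
    intro n
    by_contra h
    push_neg at h
    exact hE ⟨n, fun w hw => h w hw⟩
  letI : TopologicalSpace (Fin k) := ⊥
  haveI : DiscreteTopology (Fin k) := ⟨rfl⟩
  haveI : Nonempty (Fin k) := ⟨⟨0, hk⟩⟩
  set A : ℕ → Set (ℕ → Fin k) :=
    fun n => {v | ¬ ContainsCongPow k t n (fun s => (v s : ℕ))} with hA
  have hclosed : ∀ n, IsClosed (A n) := by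
    intro n
    have hπ : Continuous (fun (v : ℕ → Fin k) (s : Fin n) => v (s : ℕ)) :=
      continuous_pi fun s => continuous_apply _
    have : A n = (fun (v : ℕ → Fin k) (s : Fin n) => v (s : ℕ)) ⁻¹'
        {u : Fin n → Fin k |
          ¬ ContainsCongPow k t n (fun s => if h : s < n then (u ⟨s, h⟩ : ℕ) else 0)} := by
      ext v
      simp only [hA, Set.mem_setOf_eq, Set.mem_preimage]
      constructor
      · intro hv hc
        exact hv (ccp_congr (fun s hs => by simp [hs]) hc ht)
      · intro hv hc
        exact hv (ccp_congr (fun s hs => by simp [hs]) hc ht)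
    rw [this]
    exact (isClosed_discrete _).preimage hπ
  have hne : ∀ n, (A n).Nonempty := by
    intro n
    obtain ⟨w, hw, hnc⟩ := hbad n
    refine ⟨fun s => ⟨w s, hw s⟩, ?_⟩
    simpa [hA] using hnc
  have hdir : Directed (· ⊇ ·) A := by
    intro m n
    refine ⟨max m n, ?_, ?_⟩ <;>
      exact fun v hv hc => hv (ccp_mono (by omega) hc)
  obtain ⟨v, hv⟩ := IsCompact.nonempty_iInter_of_directed_nonempty_isCompact_isClosed
    A hdir hne (fun n => (hclosed n).isCompact) hclosed
  simp only [Set.mem_iInter, hA, Set.mem_setOf_eq] at hv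
  -- now use van der Waerden (Hales-Jewett) to find a congruential power
  haveI : NeZero k := ⟨by omega⟩
  set C : ℕ → ZMod k := fun m => ((∑ s ∈ Finset.range m, (v s : ℕ) : ℕ) : ZMod k) with hC
  obtain ⟨a, ha, b, c, hmono⟩ :=
    Combinatorics.exists_mono_homothetic_copy (Finset.range (t+1)) C
  have hCeq : ∀ j : ℕ, j ≤ t → C (b + j * a) = c := by
    intro j hj
    have := hmono j (Finset.mem_range.mpr (by omega))
    rwa [smul_eq_mul, show a * j + b = b + j * a by ring] at this
  have hblock : ∀ u u' : ℕ, u ≤ u' →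
      ((∑ s ∈ Finset.Ico u u', (v s : ℕ) : ℕ) : ZMod k) = C u' - C u := by
    intro u u' huu
    have h1 : (∑ s ∈ Finset.range u, (v s : ℕ)) + ∑ s ∈ Finset.Ico u u', (v s : ℕ)
        = ∑ s ∈ Finset.range u', (v s : ℕ) := Finset.sum_range_add_sum_Ico _ huu
    have := congrArg (fun m : ℕ => (m : ZMod k)) h1
    push_cast at this
    simp only [hC]
    push_cast
    rw [eq_sub_iff_add_eq, add_comm]
    exact this
  apply hv (b + t * a)
  refine ⟨b, a, ha, le_refl _, fun j hj => ?_⟩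
  rw [← ZMod.natCast_eq_natCast_iff]
  rw [hblock _ _ (by nlinarith), hblock _ _ (by omega)]
  rw [hCeq j (by omega), hCeq (j+1) (by omega),
    show b + a = b + 1 * a by ring, hCeq 1 (by omega),
    show b = b + 0 * a by ring, hCeq 0 (by omega)]

lemma omega_mem (k t n : ℕ) (hk : 1 ≤ k) (ht : 1 ≤ t)
    (hn : ∀ w : ℕ → ℕ, (∀ i, w i < k) → ContainsCongPow k t n w) :
    ∀ x : ℕ → ℕ,
      (∀ i : ℕ, 1 ≤ i → i ≤ n + 1 → (i - 1) * (k / 2) + 1 ≤ x i ∧ x i ≤ i * (k / 2)) →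
      ∃ a d : ℕ, 1 ≤ d ∧ ∀ j : ℕ, j < t + 1 →
        ∃ i : ℕ, 1 ≤ i ∧ i ≤ n + 1 ∧ x i = a + j * d := by
  intro x hx
  by_cases hK0 : k / 2 = 0
  · exfalso
    have h1 := hx 1 le_rfl (by omega)
    rw [hK0] at h1
    omega
  set K := k / 2 with hK
  have hK1 : 1 ≤ K := by omega
  have h2K : 2 * K ≤ k := by
    have := Nat.div_mul_le_self k 2
    omega
  have hk2 : 2 ≤ k := by omega
  set w : ℕ → ℕ := fun s => if s < n then x (s+2) - x (s+1) else 0 with hwdef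
  have hmono : ∀ s, s < n → x (s+1) < x (s+2) := by
    intro s hs
    have h1 := hx (s+1) (by omega) (by omega)
    have h2 := hx (s+2) (by omega) (by omega)
    have e1 : s + 1 - 1 = s := rfl
    have e2 : s + 2 - 1 = s + 1 := rfl
    rw [e1] at h1
    rw [e2] at h2
    -- x (s+1) ≤ (s+1)*K < (s+1)*K + 1 ≤ x (s+2)
    omega
  have hw' : ∀ s, s < n → w s + x (s+1) = x (s+2) := by
    intro s hs
    simp only [hwdef, if_pos hs]
    exact Nat.sub_add_cancel (le_of_lt (hmono s hs))
  have hwlt : ∀ s, w s < k := by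
    intro s
    by_cases hs : s < n
    · have h1 := hx (s+1) (by omega) (by omega)
      have e1 : s + 1 - 1 = s := rfl
      rw [e1] at h1
      have h2 := hx (s+2) (by omega) (by omega)
      have heq := hw' s hs
      have e3 : (s+2) * K = s * K + 2 * K := by ring
      have e4 : (s+1) * K = s * K + K := by ring
      -- w s = x(s+2) - x(s+1) ≤ (s*K + 2K) - (s*K + 1) = 2K - 1 < k
      have hb1 : s * K + 1 ≤ x (s+1) := by linarith [h1.1]
      have hb2 : x (s+2) ≤ s * K + 2 * K := by linarith [h2.2]
      linarith
    · simp only [hwdef, if_neg hs]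
      omega
  obtain ⟨i, d, hd, hsum, hcong⟩ := hn w hwlt
  have htd : t * d ≤ n := by omega
  have hd' : d ≤ t * d := Nat.le_mul_of_pos_left d ht
  -- generic bounds for a block sum
  have hSbound : ∀ u S : ℕ, 1 ≤ u → u + d ≤ n + 1 → S + x u = x (u + d) →
      d * K + 1 ≤ S + K ∧ S + 1 ≤ d * K + K := by
    intro u S hu hun hS
    obtain ⟨m, rfl⟩ : ∃ m, u = m + 1 := ⟨u - 1, by omega⟩
    have h1 := hx (m+1) (by omega) (by omega)
    have h2 := hx (m+1+d) (by omega) (by omega)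
    have e0 : m + 1 - 1 = m := rfl
    have e0' : m + 1 + d - 1 = m + d := by omega
    rw [e0] at h1
    rw [e0'] at h2
    have eq1 : (m+1) * K = m * K + K := by ring
    have eq2 : (m+d) * K = m * K + d * K := by ring
    have eq3 : (m+1+d) * K = m * K + K + d * K := by ring
    constructor
    · linarith [h1.2, h2.1]
    · linarith [h1.1, h2.2]
  -- telescoping for each block
  have htel := sum_Ico_telescope x w n hw'
  set S0 : ℕ := ∑ s ∈ Finset.Ico i (i + d), w s with hS0def
  have htel0 : S0 + x (i + 1) = x ((i + 1) + d) := by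
    have h := htel i (i + d) (by omega) (by omega)
    have e : i + d + 1 = (i + 1) + d := by omega
    rwa [e] at h
  have hb0 := hSbound (i+1) S0 (by omega) (by omega) htel0
  have hkey : ∀ j, j < t →
      x (i + (j+1) * d + 1) = x (i + j * d + 1) + S0 := by
    intro j hj
    have hjd : (j+1) * d ≤ t * d := Nat.mul_le_mul_right d (by omega)
    have ejd : (j+1) * d = j * d + d := by ring
    set Sj : ℕ := ∑ s ∈ Finset.Ico (i + j * d) (i + (j + 1) * d), w s with hSjdef
    have htelj : Sj + x (i + j * d + 1) = x ((i + j * d + 1) + d) := by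
      have h := htel (i + j * d) (i + (j+1) * d) (by omega) (by omega)
      have e : i + (j+1) * d + 1 = (i + j * d + 1) + d := by omega
      rwa [e] at h
    have hbj := hSbound (i + j * d + 1) Sj (by omega) (by omega) htelj
    -- Sj ≡ S0 and both in a window of width < k, hence equal
    have hmod : Sj ≡ S0 [MOD k] := hcong j hj
    have hdvd : (k : ℤ) ∣ (S0 : ℤ) - (Sj : ℤ) := hmod.dvd
    obtain ⟨z, hz⟩ := hdvd
    have c1 : (d:ℤ) * K + 1 ≤ (Sj:ℤ) + K := by exact_mod_cast hbj.1
    have c2 : (Sj:ℤ) + 1 ≤ (d:ℤ) * K + K := by exact_mod_cast hbj.2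
    have c3 : (d:ℤ) * K + 1 ≤ (S0:ℤ) + K := by exact_mod_cast hb0.1
    have c4 : (S0:ℤ) + 1 ≤ (d:ℤ) * K + K := by exact_mod_cast hb0.2
    have c5 : (2:ℤ) * K ≤ k := by exact_mod_cast h2K
    have hz0 : z = 0 := by
      rcases lt_trichotomy z 0 with h | h | h
      · exfalso
        have hzz : z ≤ -1 := by omega
        have : (k:ℤ) * z ≤ (k:ℤ) * (-1) :=
          mul_le_mul_of_nonneg_left hzz (by positivity)
        linarith
      · exact h
      · exfalso
        have hzz : (1:ℤ) ≤ z := by omega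
        have : (k:ℤ) * 1 ≤ (k:ℤ) * z :=
          mul_le_mul_of_nonneg_left hzz (by positivity)
        linarith
    rw [hz0, mul_zero] at hz
    have : Sj = S0 := by omega
    have e2 : i + (j+1) * d + 1 = (i + j * d + 1) + d := by omega
    rw [e2]
    omega
  -- the AP
  have hS0pos : 1 ≤ S0 := by
    have : K ≤ d * K := Nat.le_mul_of_pos_left K hd
    omega
  have hAP : ∀ j, j ≤ t → x (i + j * d + 1) = x (i + 1) + j * S0 := by
    intro j
    induction j with
    | zero => simp
    | succ j ih =>
      intro hj
      have h1 := hkey j (by omega)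
      have h2 := ih (by omega)
      have e : (j+1) * S0 = j * S0 + S0 := by ring
      omega
  refine ⟨x (i + 1), S0, hS0pos, fun j hj => ⟨i + j * d + 1, by omega, ?_, ?_⟩⟩
  · have : j * d ≤ t * d := Nat.mul_le_mul_right d (by omega)
    omega
  · exact hAP j (by omega)

/-- For all positive integers `k` and `t`,
`𝓛(k, t) ≥ Ω(t + 1, ⌊k/2⌋) - 1`. -/
theorem stmt_15 (k t : ℕ) (hk : 1 ≤ k) (ht : 1 ≤ t) :
    Omega (t + 1) (k / 2) - 1 ≤ Lfn k t := by
  have hA := lfn_set_nonempty k t hk ht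
  have hmem : Lfn k t ∈ {n : ℕ | ∀ w : ℕ → ℕ, (∀ i, w i < k) → ContainsCongPow k t n w} :=
    Nat.sInf_mem hA
  have hOm : Omega (t + 1) (k / 2) ≤ Lfn k t + 1 :=
    Nat.sInf_le (omega_mem k t (Lfn k t) hk ht hmem)
  omega
end
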